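/- arXiv:2209.13186 — 6 statements merged into one kernel-verified Lean document; each statement's English description precedes it below -/
import Mathlib

section
/- Let b be a prime, k a positive integer with NRT weight μ_1(k) = c, and k' a positive integer also with μ_1(k') = c. Fix n ≥ c. Among all n×n lower-triangular matrices L over F_b with nonzero diagonal entries, the proportion of L with L^T k⃗ = k⃗' (where k⃗ denotes the length-n digit vector of k) is exactly 1 / ((b-1) b^{c-1}). -/
/-!
Let `d`, `d'` be the digit vectors of `k`, `k'`; both vanish beyond `m = c - 1` and are nonzero
at `m`. For a lower-triangular `L`, the vector `Lᵀ d` vanishes beyond `m` as well, and its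
`m`-th entry is `L m m * d m`. Adding to `L` a matrix supported on row `m`, columns `≤ m`, shifts the entries
`0, …, m` of `Lᵀ d` by an arbitrary vector without touching the other diagonal entries. Hence,
on the lower-triangular matrices whose diagonal is nonzero away from `m`, the map
`L ↦ (Lᵀ d)|_{≤ m}` is a product projection onto `F_b^{m+1}`. The matrices with nonzero diagonal
are the preimage of the `(b - 1) b^m` vectors with nonzero last entry, and the solutions of
`Lᵀ d = d'` form one fibre.
-/

/-- The `i`-th base-`b` digit of `k`, viewed in `F_b`. -/
def digitVec (b k i : ℕ) : ZMod b := ((Nat.digits b k).getD i 0 : ZMod b)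

/-- The NRT weight `μ₁(k)`. -/
def nrtWeight (b k : ℕ) : ℕ := (Nat.digits b k).length

open Matrix

section Translation

variable {M V : Type*} [AddCommGroup M] [AddCommGroup V]
  (f : M → V) (s : V →+ M) (P : Set M) (T : Set V) (a : V)

def equivFiberProd (hP : ∀ x ∈ P, ∀ v, x + s v ∈ P) (hf : ∀ x ∈ P, ∀ v, f (x + s v) = f x + v) :
    {x // x ∈ P ∧ f x ∈ T} ≃ {x // x ∈ P ∧ f x = a} × T where
  toFun x := (⟨x + s (a - f x), hP _ x.2.1 _, by rw [hf _ x.2.1, add_sub_cancel]⟩, ⟨f x, x.2.2⟩)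
  invFun y := ⟨y.1 + s (y.2 - a), hP _ y.1.2.1 _, by
    rw [hf _ y.1.2.1, y.1.2.2, add_sub_cancel]; exact y.2.2⟩
  left_inv x := by
    ext
    simp only [add_assoc, ← map_add, sub_add_sub_cancel, sub_self, map_zero, add_zero]
  right_inv := by
    rintro ⟨⟨x, hxP, hxa⟩, w, hw⟩
    have hfx : f (x + s (w - a)) = w := by rw [hf x hxP, hxa, add_sub_cancel]
    ext
    · simp only [hfx, add_assoc, ← map_add, sub_add_sub_cancel, sub_self, map_zero, add_zero]
    · exact hfx

theorem ncard_preimage_eq_ncard_fiber_mul (hP : ∀ x ∈ P, ∀ v, x + s v ∈ P)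
    (hf : ∀ x ∈ P, ∀ v, f (x + s v) = f x + v) :
    {x | x ∈ P ∧ f x ∈ T}.ncard = {x | x ∈ P ∧ f x = a}.ncard * Nat.card T :=
  (Nat.card_congr (equivFiberProd f s P T a hP hf)).trans (Nat.card_prod _ _)

end Translation

theorem Nat.card_pi_apply_ne_zero {ι F : Type*} [Fintype ι] [DecidableEq ι] [GroupWithZero F]
    (i : ι) :
    Nat.card {w : ι → F // w i ≠ 0} = (Nat.card F - 1) * Nat.card F ^ (Fintype.card ι - 1) := by
  have e : {w : ι → F // w i ≠ 0} ≃ {x : F // x ≠ 0} × ({j // j ≠ i} → F) :=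
    ((Equiv.piSplitAt i fun _ => F).subtypeEquiv fun _ => Iff.rfl).trans
      (Equiv.prodSubtypeFstEquivSubtypeProd (p := (· ≠ 0)))
  rw [Nat.card_congr e, Nat.card_prod, Nat.card_fun,
    ← Nat.card_congr unitsEquivNeZero, Nat.card_units, Nat.card_eq_fintype_card (α := {j // j ≠ i}),
    Fintype.card_subtype_compl, Fintype.card_subtype_eq]

section LowerTriangular

variable {F : Type*} [Field F] {n : ℕ} (d : Fin n → F) (m : Fin n)

def headTransposeMulVec (L : Matrix (Fin n) (Fin n) F) : Set.Iic m → F :=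
  fun j => (Lᵀ *ᵥ d) j

def rowLift : (Set.Iic m → F) →+ Matrix (Fin n) (Fin n) F :=
  AddMonoidHom.mk' (fun v => Matrix.of fun i j => if h : i = m ∧ j ≤ m then v ⟨j, h.2⟩ / d m else 0)
    fun v w => by
      ext i j
      simp only [of_apply, Matrix.add_apply, Pi.add_apply]
      split_ifs <;> ring

variable {d m}

theorem transpose_mulVec_apply_eq_zero_of_lt {L : Matrix (Fin n) (Fin n) F}
    (hL : ∀ i j, i < j → L i j = 0) (hd : ∀ j, m < j → d j = 0) {j : Fin n} (hj : m < j) :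
    (Lᵀ *ᵥ d) j = 0 := by
  rw [mulVec_transpose, vecMul, dotProduct]
  refine Finset.sum_eq_zero fun r _ => ?_
  rcases lt_or_ge r j with hr | hr
  · rw [hL r j hr, mul_zero]
  · rw [hd r (hj.trans_le hr), zero_mul]

theorem transpose_mulVec_apply_self {L : Matrix (Fin n) (Fin n) F}
    (hL : ∀ i j, i < j → L i j = 0) (hd : ∀ j, m < j → d j = 0) :
    (Lᵀ *ᵥ d) m = L m m * d m := by
  rw [mulVec_transpose, vecMul, dotProduct, Finset.sum_eq_single m, mul_comm]
  · intro r _ hr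
    rcases hr.lt_or_gt with hr | hr
    · rw [hL r m hr, mul_zero]
    · rw [hd r hr, zero_mul]
  · simp

theorem headTransposeMulVec_rowLift (hdm : d m ≠ 0) (v : Set.Iic m → F) :
    headTransposeMulVec d m (rowLift d m v) = v := by
  ext ⟨j, hj⟩
  rw [headTransposeMulVec, mulVec_transpose, vecMul, dotProduct, Finset.sum_eq_single m]
  · simp [rowLift, Set.mem_Iic.mp hj, mul_div_cancel₀ _ hdm]
  · intro r _ hr
    simp [rowLift, hr]
  · simp

theorem headTransposeMulVec_add_rowLift (hdm : d m ≠ 0) (L : Matrix (Fin n) (Fin n) F)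
    (v : Set.Iic m → F) :
    headTransposeMulVec d m (L + rowLift d m v) = headTransposeMulVec d m L + v := by
  funext j
  have h := congrFun (headTransposeMulVec_rowLift hdm v) j
  simp only [headTransposeMulVec, transpose_add, add_mulVec, Pi.add_apply] at h ⊢
  rw [h]

theorem add_rowLift_mem {L : Matrix (Fin n) (Fin n) F}
    (hL : (∀ i j, i < j → L i j = 0) ∧ ∀ i ≠ m, L i i ≠ 0) (v : Set.Iic m → F) :
    (∀ i j, i < j → (L + rowLift d m v) i j = 0) ∧ ∀ i ≠ m, (L + rowLift d m v) i i ≠ 0 := by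
  refine ⟨fun i j hij => ?_, fun i hi => ?_⟩
  · have : ¬(i = m ∧ j ≤ m) := fun h => (h.1 ▸ hij).not_ge h.2
    simp [rowLift, hL.1 i j hij, this]
  · simpa [rowLift, hi] using hL.2 i hi

theorem ncard_lowerTriangular_eq_ncard_transpose_mulVec_eq_mul (hdm : d m ≠ 0)
    (hd : ∀ j, m < j → d j = 0) {d' : Fin n → F} (hd'm : d' m ≠ 0) (hd' : ∀ j, m < j → d' j = 0) :
    {L : Matrix (Fin n) (Fin n) F | (∀ i j, i < j → L i j = 0) ∧ ∀ i, L i i ≠ 0}.ncard =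
      {L : Matrix (Fin n) (Fin n) F |
        (∀ i j, i < j → L i j = 0) ∧ (∀ i, L i i ≠ 0) ∧ Lᵀ *ᵥ d = d'}.ncard *
        ((Nat.card F - 1) * Nat.card F ^ (m : ℕ)) := by
  set P := {L : Matrix (Fin n) (Fin n) F | (∀ i j, i < j → L i j = 0) ∧ ∀ i ≠ m, L i i ≠ 0}
  have hdiag : ∀ L : Matrix (Fin n) (Fin n) F,
      (∀ i, L i i ≠ 0) ↔ (∀ i ≠ m, L i i ≠ 0) ∧ L m m ≠ 0 := fun L =>
    ⟨fun h => ⟨fun i _ => h i, h m⟩, fun h i => if hi : i = m then hi ▸ h.2 else h.1 i hi⟩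
  have hS : {L : Matrix (Fin n) (Fin n) F | (∀ i j, i < j → L i j = 0) ∧ ∀ i, L i i ≠ 0} =
      {L | L ∈ P ∧ headTransposeMulVec d m L ∈ {w | w ⟨m, Set.mem_Iic.2 le_rfl⟩ ≠ 0}} := by
    ext L
    simp only [Set.mem_ofPred_eq, P, hdiag, headTransposeMulVec, and_assoc]
    refine and_congr_right fun hL => and_congr_right fun _ => ?_
    rw [transpose_mulVec_apply_self hL hd, mul_ne_zero_iff, and_iff_left hdm]
  have hS' : {L : Matrix (Fin n) (Fin n) F |
        (∀ i j, i < j → L i j = 0) ∧ (∀ i, L i i ≠ 0) ∧ Lᵀ *ᵥ d = d'} =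
      {L | L ∈ P ∧ headTransposeMulVec d m L = fun j : Set.Iic m => d' j} := by
    ext L
    simp only [Set.mem_ofPred_eq, P, hdiag]
    refine ⟨fun ⟨hL, ⟨hoff, _⟩, hLd⟩ => ⟨⟨hL, hoff⟩, funext fun j => congrFun hLd j⟩, ?_⟩
    rintro ⟨⟨hL, hoff⟩, hLd⟩
    have hLd' : Lᵀ *ᵥ d = d' := by
      funext j
      rcases le_or_gt j m with hj | hj
      · exact congrFun hLd ⟨j, hj⟩
      · rw [transpose_mulVec_apply_eq_zero_of_lt hL hd hj, hd' j hj]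
    have hLm : L m m * d m = d' m := by rw [← transpose_mulVec_apply_self hL hd, hLd']
    exact ⟨hL, ⟨hoff, left_ne_zero_of_mul (hLm ▸ hd'm)⟩, hLd'⟩
  rw [hS, hS', ncard_preimage_eq_ncard_fiber_mul _ (rowLift d m) P _ _
    (fun _ hL => add_rowLift_mem hL) (fun L _ => headTransposeMulVec_add_rowLift hdm L)]
  congr 1
  rw [Set.coe_ofPred, Nat.card_pi_apply_ne_zero, Fintype.card_Iic, Fin.card_Iic, Nat.add_sub_cancel]

theorem ncard_transpose_mulVec_eq_div_ncard_lowerTriangular [Finite F] (hdm : d m ≠ 0)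
    (hd : ∀ j, m < j → d j = 0) {d' : Fin n → F} (hd'm : d' m ≠ 0) (hd' : ∀ j, m < j → d' j = 0) :
    ({L : Matrix (Fin n) (Fin n) F |
        (∀ i j, i < j → L i j = 0) ∧ (∀ i, L i i ≠ 0) ∧ Lᵀ *ᵥ d = d'}.ncard : ℝ) /
      {L : Matrix (Fin n) (Fin n) F | (∀ i j, i < j → L i j = 0) ∧ ∀ i, L i i ≠ 0}.ncard =
      1 / (((Nat.card F : ℝ) - 1) * (Nat.card F : ℝ) ^ (m : ℕ)) := by
  have hone : (1 : Matrix (Fin n) (Fin n) F) ∈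
      {L : Matrix (Fin n) (Fin n) F | (∀ i j, i < j → L i j = 0) ∧ ∀ i, L i i ≠ 0} :=
    ⟨fun i j hij => one_apply_ne hij.ne, fun i => by simp⟩
  have hpos := (Set.ncard_pos (Set.toFinite _)).2 ⟨1, hone⟩
  rw [ncard_lowerTriangular_eq_ncard_transpose_mulVec_eq_mul hdm hd hd'm hd'] at hpos ⊢
  rw [Nat.cast_mul, div_mul_cancel_left₀ (by exact_mod_cast (Nat.pos_of_mul_pos_right hpos).ne'),
    Nat.cast_mul, Nat.cast_sub Nat.card_pos, Nat.cast_pow, Nat.cast_one, one_div]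

end LowerTriangular

theorem nrtWeight_pos {b k : ℕ} (hk : k ≠ 0) : 0 < nrtWeight b k :=
  List.length_pos_iff.mpr (Nat.digits_ne_nil_iff_ne_zero.mpr hk)

theorem digitVec_eq_zero_of_nrtWeight_le {b k i : ℕ} (hi : nrtWeight b k ≤ i) :
    digitVec b k i = 0 := by
  rw [digitVec, List.getD_eq_default _ _ hi, Nat.cast_zero]

theorem digitVec_nrtWeight_sub_one_ne_zero {b k : ℕ} (hb : 1 < b) (hk : k ≠ 0) :
    digitVec b k (nrtWeight b k - 1) ≠ 0 := by
  have hne := (Nat.digits_ne_nil_iff_ne_zero (b := b)).mpr hk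
  rw [digitVec, nrtWeight,
    List.getD_eq_getElem _ _ (Nat.sub_one_lt (List.length_pos_iff.mpr hne).ne'),
    ← List.getLast_eq_getElem hne, Ne, ZMod.natCast_eq_zero_iff]
  exact fun h => Nat.getLast_digit_ne_zero b hk
    (Nat.eq_zero_of_dvd_of_lt h (Nat.digits_lt_base hb (List.getLast_mem hne)))

/-- Among lower-triangular `n × n` matrices `L` over `F_b` with nonzero diagonal,
the proportion of those with `Lᵀ k⃗ = k⃗'` (digit vectors of length `n`), for
positive integers `k, k'` of equal NRT weight `c ≤ n`, is exactly
`1 / ((b-1) b^(c-1))`. -/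
theorem stmt_9 (b : ℕ) (hb : b.Prime) (n c k k' : ℕ)
    (hk : 0 < k) (hk' : 0 < k')
    (hkc : nrtWeight b k = c) (hk'c : nrtWeight b k' = c) (hn : c ≤ n) :
    ({L : Matrix (Fin n) (Fin n) (ZMod b) |
        (∀ i j : Fin n, (i : ℕ) < (j : ℕ) → L i j = 0) ∧ (∀ i, L i i ≠ 0) ∧
        L.transpose.mulVec (fun i : Fin n => digitVec b k i) =
          (fun i : Fin n => digitVec b k' i)}.ncard : ℝ) /
      ({L : Matrix (Fin n) (Fin n) (ZMod b) |
        (∀ i j : Fin n, (i : ℕ) < (j : ℕ) → L i j = 0) ∧ (∀ i, L i i ≠ 0)}.ncard : ℝ)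
      = 1 / (((b : ℝ) - 1) * (b : ℝ) ^ (c - 1)) := by
  have : Fact b.Prime := ⟨hb⟩
  have hc : 0 < c := hkc ▸ nrtWeight_pos hk.ne'
  let m : Fin n := ⟨c - 1, by omega⟩
  have hlead {k : ℕ} (hk : 0 < k) (hkc : nrtWeight b k = c) : digitVec b k m ≠ 0 := by
    simpa only [hkc] using digitVec_nrtWeight_sub_one_ne_zero hb.one_lt hk.ne'
  have hvanish {k : ℕ} (hkc : nrtWeight b k = c) (j : Fin n) (hj : m < j) : digitVec b k j = 0 :=
    digitVec_eq_zero_of_nrtWeight_le (by have : c - 1 < (j : ℕ) := hj; omega)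
  have h := ncard_transpose_mulVec_eq_div_ncard_lowerTriangular (F := ZMod b) (m := m)
    (hlead hk hkc) (hvanish hkc) (hlead hk' hk'c) (hvanish hk'c)
  rwa [Nat.card_zmod] at h
end

section
/- Let P be a digital (t,m,s)-net in base b (b prime), and for nonempty u ⊆ {1,...,s} let the projection P_u be a digital (t_u, m, |u|)-net. For c_u = (c_j)_{j∈u} ∈ ℕ^{|u|} with |c_u|_1 = ∑_{j∈u} c_j, the number of vectors k = (k_1,...,k_s) in the dual net P^⊥ with μ_1(k_j) = c_j for j ∈ u and k_j = 0 otherwise is at most: 0 if |c_u|_1 ≤ m - t_u; (b-1)^{|c_u|_1 - (m-t_u)} if m - t_u < |c_u|_1 ≤ m - t_u + |u|; and (b-1)^{|u|} b^{|c_u|_1 - (m - t_u + |u|)} if |c_u|_1 > m - t_u + |u|. In all cases the count is at most ((b-1)/b) b^{|c_u|_1 - (m - t_u)}. -/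
/-- The dual net of the digital net over `F_b` with generating matrices
`C j ∈ F_b^{n×m}`: all `k ∈ ℕ₀^s` with `∑_j (C j)ᵀ tr_n(k⃗_j) = 0 ∈ F_b^m`. -/
def dualNet {b s m n : ℕ} (C : Fin s → Matrix (Fin n) (Fin m) (ZMod b)) :
    Set (Fin s → ℕ) :=
  {k | ∑ j, (C j).transpose.mulVec (fun i : Fin n => digitVec b (k j) i) = 0}

open Finset

theorem Finset.exists_le_sum_eq {ι : Type*} (s : Finset ι) (g : ι → ℕ) :
    ∀ N ≤ ∑ i ∈ s, g i, ∃ f ≤ g, ∑ i ∈ s, f i = N := by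
  classical
  induction s using Finset.induction_on with
  | empty => exact fun N hN => ⟨0, fun i => Nat.zero_le _, by simp_all⟩
  | insert a s ha ih =>
    intro N hN
    rw [sum_insert ha] at hN
    obtain ⟨f, hfg, hf⟩ := ih (N - min N (g a)) (by omega)
    refine ⟨Function.update f a (min N (g a)), fun i => ?_, ?_⟩
    · rcases eq_or_ne i a with rfl | hi
      · simp
      · simpa [hi] using hfg i
    · have hs : ∑ i ∈ s, Function.update f a (min N (g a)) i = ∑ i ∈ s, f i :=
        sum_congr rfl fun i hi => Function.update_of_ne (ne_of_mem_of_not_mem hi ha) _ _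
      rw [sum_insert ha, Function.update_self, hs, hf]
      omega

theorem sub_one_pow_mul_pow_le {x : ℝ} (hx : 1 ≤ x) {p E : ℕ} (hp : 1 ≤ p) (hpE : p ≤ E) :
    (x - 1) ^ p * x ^ (E - p) ≤ (x - 1) / x * x ^ E := by
  obtain ⟨q, rfl⟩ := Nat.exists_eq_add_of_le' hp
  obtain ⟨r, rfl⟩ := Nat.exists_eq_add_of_le hpE
  have hq : (x - 1) ^ q ≤ x ^ q := pow_le_pow_left₀ (by linarith) (by linarith) q
  have hx0 : x ≠ 0 := by positivity
  calc (x - 1) ^ (q + 1) * x ^ (q + 1 + r - (q + 1))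
      = (x - 1) * (x - 1) ^ q * x ^ r := by rw [Nat.add_sub_cancel_left, pow_succ']
    _ ≤ (x - 1) * x ^ q * x ^ r := by gcongr
    _ = (x - 1) / x * x ^ (q + 1 + r) := by field_simp; ring

section Digits

variable {b : ℕ}

theorem digitVec_eq_natCast (hb : 1 < b) (k i : ℕ) :
    digitVec b k i = ((k / b ^ i % b : ℕ) : ZMod b) := by
  rw [digitVec, Nat.getD_digits k i hb]

theorem digitVec_eq_digitVec_iff (hb : 1 < b) {x y i : ℕ} :
    digitVec b x i = digitVec b y i ↔ x / b ^ i % b = y / b ^ i % b := by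
  rw [digitVec_eq_natCast hb, digitVec_eq_natCast hb, ZMod.natCast_eq_natCast_iff', Nat.mod_mod,
    Nat.mod_mod]

@[simp]
theorem digitVec_zero : digitVec b 0 = 0 := by
  funext i
  simp [digitVec]

theorem digitVec_div_pow (hb : 1 < b) (x d i : ℕ) :
    digitVec b (x / b ^ d) i = digitVec b x (i + d) := by
  rw [digitVec_eq_natCast hb, digitVec_eq_natCast hb, Nat.div_div_eq_div_mul, ← pow_add, add_comm]

theorem digitVec_eq_zero_of_lt_pow (hb : 1 < b) {x N i : ℕ} (hx : x < b ^ N) (hi : N ≤ i) :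
    digitVec b x i = 0 := by
  rw [digitVec_eq_natCast hb, Nat.div_eq_of_lt (hx.trans_le (Nat.pow_le_pow_right (by omega) hi)),
    Nat.zero_mod, Nat.cast_zero]

theorem digitVec_injective (hb : 1 < b) : Function.Injective (digitVec b) := by
  intro x y h
  have hmod : ∀ N, x % b ^ N = y % b ^ N := by
    intro N
    induction N with
    | zero => simp [Nat.mod_one]
    | succ N ih =>
      rw [Nat.mod_pow_succ, Nat.mod_pow_succ, ih, (digitVec_eq_digitVec_iff hb).1 (congrFun h N)]
  have hx : x < b ^ (x + y) := (Nat.lt_pow_self hb).trans_le' (by omega)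
  have hy : y < b ^ (x + y) := (Nat.lt_pow_self hb).trans_le' (by omega)
  calc x = x % b ^ (x + y) := (Nat.mod_eq_of_lt hx).symm
    _ = y % b ^ (x + y) := hmod _
    _ = y := Nat.mod_eq_of_lt hy

theorem exists_lt_pow_digitVec_eq (hb : 1 < b) (f : ℕ → ZMod b) (N : ℕ) :
    ∃ w < b ^ N, ∀ i < N, digitVec b w i = f i := by
  have : NeZero b := ⟨by omega⟩
  induction N generalizing f with
  | zero => exact ⟨0, by simp, by simp⟩
  | succ N ih =>
    obtain ⟨w, hw, hwf⟩ := ih (fun i => f (i + 1))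
    have hf0 : (f 0).val < b := ZMod.val_lt (f 0)
    refine ⟨(f 0).val + b * w, ?_, ?_⟩
    · rw [pow_succ']
      nlinarith
    · rintro (_ | i) hi
      · rw [digitVec_eq_natCast hb, pow_zero, Nat.div_one, Nat.add_mul_mod_self_left,
          Nat.mod_eq_of_lt hf0, ZMod.natCast_zmod_val]
      · have hshift : ((f 0).val + b * w) / b ^ 1 = w := by
          rw [pow_one, Nat.add_mul_div_left _ _ (by omega), Nat.div_eq_of_lt hf0, zero_add]
        rw [← digitVec_div_pow hb, hshift]
        exact hwf i (by omega)

end Digits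

section Weights

variable {b : ℕ}

theorem nrtWeight_le_iff (hb : 1 < b) {k c : ℕ} : nrtWeight b k ≤ c ↔ k < b ^ c :=
  Nat.digits_length_le_iff hb k

theorem nrtWeight_eq_zero_iff {k : ℕ} : nrtWeight b k = 0 ↔ k = 0 := by
  simp [nrtWeight, Nat.digits_eq_nil_iff_eq_zero]

@[simp]
theorem nrtWeight_zero : nrtWeight b 0 = 0 :=
  nrtWeight_eq_zero_iff.2 rfl

theorem nrtWeight_div_pow (hb : 1 < b) (k d : ℕ) : nrtWeight b (k / b ^ d) = nrtWeight b k - d := by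
  have key : ∀ c, nrtWeight b (k / b ^ d) ≤ c ↔ nrtWeight b k - d ≤ c := fun c => by
    rw [nrtWeight_le_iff hb, Nat.div_lt_iff_lt_mul (by positivity), ← pow_add,
      ← nrtWeight_le_iff hb, tsub_le_iff_right]
  exact le_antisymm ((key _).2 le_rfl) ((key _).1 le_rfl)

def nrtWeightFinset (b e : ℕ) : Finset ℕ := {x ∈ range (b ^ e) | nrtWeight b x = e}

theorem mem_nrtWeightFinset (hb : 1 < b) {x e : ℕ} :
    x ∈ nrtWeightFinset b e ↔ nrtWeight b x = e := by
  rw [nrtWeightFinset, mem_filter, mem_range, and_iff_right_iff_imp]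
  exact fun h => (nrtWeight_le_iff hb).1 h.le

theorem card_nrtWeightFinset_zero : #(nrtWeightFinset b 0) = 1 := by
  rw [card_eq_one]
  exact ⟨0, by ext x; simp [nrtWeightFinset, nrtWeight_eq_zero_iff]⟩

theorem card_nrtWeightFinset_succ (hb : 1 < b) (e : ℕ) :
    #(nrtWeightFinset b (e + 1)) = (b - 1) * b ^ e := by
  have hIco : nrtWeightFinset b (e + 1) = Ico (b ^ e) (b ^ (e + 1)) := by
    ext x
    rw [mem_nrtWeightFinset hb, mem_Ico, ← Nat.lt_digits_length_iff hb, ← nrtWeight_le_iff hb,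
      nrtWeight]
    omega
  rw [hIco, Nat.card_Ico, Nat.sub_one_mul, pow_succ']

end Weights

/-- With `δ = m - t_u` this is the dual characterization of the projection `P_u` being a
digital `(t_u, m, |u|)`-net. -/
def MinDualWeightGt {b s m n : ℕ} (C : Fin s → Matrix (Fin n) (Fin m) (ZMod b))
    (u : Finset (Fin s)) (δ : ℕ) : Prop :=
  ∀ k ∈ dualNet C, k ≠ 0 → (∀ j ∉ u, k j = 0) → δ < ∑ j, nrtWeight b (k j)

def dualWeightClass {b s m n : ℕ} (C : Fin s → Matrix (Fin n) (Fin m) (ZMod b))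
    (u : Finset (Fin s)) (c : Fin s → ℕ) : Set (Fin s → ℕ) :=
  {k | k ∈ dualNet C ∧ (∀ j ∈ u, nrtWeight b (k j) = c j) ∧ ∀ j, j ∉ u → k j = 0}

section DualNet

variable {b s m n : ℕ} {C : Fin s → Matrix (Fin n) (Fin m) (ZMod b)} {u : Finset (Fin s)}
  {δ : ℕ}

theorem mem_dualNet_of_digitVec_eq_sub {k k' w : Fin s → ℕ} (hk : k ∈ dualNet C)
    (hk' : k' ∈ dualNet C) (hw : ∀ j, digitVec b (w j) = digitVec b (k j) - digitVec b (k' j)) :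
    w ∈ dualNet C := by
  have hcoord : ∀ j, (fun i : Fin n => digitVec b (w j) i) =
      (fun i : Fin n => digitVec b (k j) i) - fun i : Fin n => digitVec b (k' j) i :=
    fun j => funext fun i => congrFun (hw j) i
  simp only [dualNet, Set.mem_ofPred_eq, hcoord, Matrix.mulVec_sub, sum_sub_distrib] at hk hk' ⊢
  rw [hk, hk', sub_zero]

theorem sum_nrtWeight_eq_of_support {k : Fin s → ℕ} (hk : ∀ j ∉ u, k j = 0) :
    ∑ j, nrtWeight b (k j) = ∑ j ∈ u, nrtWeight b (k j) :=
  (sum_subset (subset_univ u) fun j _ hj => by rw [hk j hj, nrtWeight_zero]).symm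

theorem eq_zero_of_lt_pow (hb : 1 < b) (hnet : MinDualWeightGt C u δ)
    {w d : Fin s → ℕ} (hw : w ∈ dualNet C)
    (hwu : ∀ j ∉ u, w j = 0) (hwd : ∀ j ∈ u, w j < b ^ d j) (hd : ∑ j ∈ u, d j ≤ δ) : w = 0 := by
  by_contra hw0
  have hlarge := hnet w hw hw0 hwu
  have hsmall : ∑ j ∈ u, nrtWeight b (w j) ≤ ∑ j ∈ u, d j :=
    sum_le_sum fun j hj => (nrtWeight_le_iff hb).2 (hwd j hj)
  rw [sum_nrtWeight_eq_of_support hwu] at hlarge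
  omega

theorem eq_of_div_pow_eq (hb : 1 < b) (hnet : MinDualWeightGt C u δ)
    {k k' d : Fin s → ℕ} (hk : k ∈ dualNet C)
    (hk' : k' ∈ dualNet C) (hku : ∀ j ∉ u, k j = 0) (hk'u : ∀ j ∉ u, k' j = 0)
    (hd : ∑ j ∈ u, d j ≤ δ) (hkk' : ∀ j, k j / b ^ d j = k' j / b ^ d j) : k = k' := by
  choose w hwd hw using fun j =>
    exists_lt_pow_digitVec_eq hb (digitVec b (k j) - digitVec b (k' j)) (d j)
  have hdigits : ∀ j, digitVec b (w j) = digitVec b (k j) - digitVec b (k' j) := by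
    intro j
    funext i
    rcases lt_or_ge i (d j) with hi | hi
    · exact hw j i hi
    · obtain ⟨i, rfl⟩ := Nat.exists_eq_add_of_le' hi
      rw [digitVec_eq_zero_of_lt_pow hb (hwd j) hi, Pi.sub_apply, ← digitVec_div_pow hb,
        ← digitVec_div_pow hb, hkk', sub_self]
  have hwu : ∀ j ∉ u, w j = 0 := fun j hj =>
    digitVec_injective hb (by rw [hdigits, hku j hj, hk'u j hj, sub_self, digitVec_zero])
  have hw0 : w = 0 := eq_zero_of_lt_pow hb hnet (mem_dualNet_of_digitVec_eq_sub hk hk' hdigits)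
    hwu (fun j _ => hwd j) hd
  funext j
  apply digitVec_injective hb
  rw [← sub_eq_zero, ← hdigits, hw0, Pi.zero_apply, digitVec_zero]

end DualNet

section WeightClass

variable {b s m n : ℕ} {C : Fin s → Matrix (Fin n) (Fin m) (ZMod b)} {u : Finset (Fin s)}
  {δ : ℕ} {c : Fin s → ℕ}

theorem dualWeightClass_eq_empty (hu : u.Nonempty) (hnet : MinDualWeightGt C u δ)
    (hc : ∀ j ∈ u, 1 ≤ c j) (hcδ : ∑ j ∈ u, c j ≤ δ) : dualWeightClass C u c = ∅ := by
  refine Set.eq_empty_of_forall_notMem fun k ⟨hk, hkc, hku⟩ => ?_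
  obtain ⟨j, hj⟩ := hu
  have hk0 : k ≠ 0 := by
    rintro rfl
    have h := hc j hj
    rw [← hkc j hj, Pi.zero_apply, nrtWeight_zero] at h
    omega
  have hlarge := hnet k hk hk0 hku
  have hweights : ∑ j ∈ u, nrtWeight b (k j) = ∑ j ∈ u, c j := sum_congr rfl hkc
  rw [sum_nrtWeight_eq_of_support hku] at hlarge
  omega

theorem ncard_dualWeightClass_le_prod (hb : 1 < b) (hnet : MinDualWeightGt C u δ)
    {e : Fin s → ℕ} (hec : ∀ j ∈ u, e j ≤ c j) (hδ : ∑ j ∈ u, (c j - e j) ≤ δ) :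
    (dualWeightClass C u c).ncard ≤ ∏ j ∈ u, #(nrtWeightFinset b (e j)) := by
  classical
  let t : Fin s → Finset ℕ := fun j => if j ∈ u then nrtWeightFinset b (e j) else {0}
  calc (dualWeightClass C u c).ncard ≤ (Fintype.piFinset t : Set (Fin s → ℕ)).ncard := by
        refine Set.ncard_le_ncard_of_injOn (fun k j => k j / b ^ (c j - e j)) ?_ ?_
        · rintro k ⟨-, hkc, hku⟩
          rw [mem_coe, Fintype.mem_piFinset]
          intro j
          by_cases hj : j ∈ u
          · simp only [t, if_pos hj]
            rw [mem_nrtWeightFinset hb, nrtWeight_div_pow hb, hkc j hj]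
            have := hec j hj
            omega
          · simp [t, hj, hku j hj]
        · rintro k ⟨hk, -, hku⟩ k' ⟨hk', -, hk'u⟩ hkk'
          exact eq_of_div_pow_eq hb hnet hk hk' hku hk'u hδ (congrFun hkk')
    _ = ∏ j ∈ u, #(nrtWeightFinset b (e j)) := by
        rw [Set.ncard_coe_finset, Fintype.card_piFinset]
        simp [t, apply_ite card, prod_ite_mem]

theorem ncard_dualWeightClass_le_sub_one_pow (hb : 1 < b) (hnet : MinDualWeightGt C u δ)
    (hc : ∀ j ∈ u, 1 ≤ c j) (hcδ : ∑ j ∈ u, c j ≤ δ + #u) :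
    (dualWeightClass C u c).ncard ≤ (b - 1) ^ (∑ j ∈ u, c j - δ) := by
  classical
  obtain ⟨v, hvu, hv⟩ := exists_subset_card_eq (s := u) (n := ∑ j ∈ u, c j - δ) (by omega)
  let e : Fin s → ℕ := fun j => if j ∈ v then 1 else 0
  have hec : ∀ j ∈ u, e j ≤ c j := fun j hj => by
    have := hc j hj
    simp only [e]
    split_ifs <;> omega
  have hsum : ∑ j ∈ u, (c j - e j) + #v = ∑ j ∈ u, c j := by
    have hev : ∑ j ∈ u, e j = #v := by
      rw [sum_ite_mem, inter_eq_right.2 hvu, sum_const, smul_eq_mul, mul_one]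
    rw [← hev, ← sum_add_distrib]
    exact sum_congr rfl fun j hj => Nat.sub_add_cancel (hec j hj)
  calc (dualWeightClass C u c).ncard ≤ ∏ j ∈ u, #(nrtWeightFinset b (e j)) :=
        ncard_dualWeightClass_le_prod hb hnet hec (by omega)
    _ = (b - 1) ^ (∑ j ∈ u, c j - δ) := by
        have hcard : ∀ j, #(nrtWeightFinset b (e j)) = if j ∈ v then b - 1 else 1 := fun j => by
          simp only [e]
          split_ifs
          · simpa using card_nrtWeightFinset_succ hb 0
          · exact card_nrtWeightFinset_zero
        rw [prod_congr rfl fun j _ => hcard j, prod_ite_mem, inter_eq_right.2 hvu, prod_const, hv]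

theorem ncard_dualWeightClass_le_sub_one_pow_mul_pow (hb : 1 < b)
    (hnet : MinDualWeightGt C u δ) (hc : ∀ j ∈ u, 1 ≤ c j) (hcδ : δ + #u ≤ ∑ j ∈ u, c j) :
    (dualWeightClass C u c).ncard ≤ (b - 1) ^ #u * b ^ (∑ j ∈ u, c j - (δ + #u)) := by
  have hsum_pred : ∑ j ∈ u, (c j - 1) + #u = ∑ j ∈ u, c j := by
    rw [card_eq_sum_ones, ← sum_add_distrib]
    exact sum_congr rfl fun j hj => Nat.sub_add_cancel (hc j hj)
  obtain ⟨f, hfc, hf⟩ :=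
    exists_le_sum_eq u (fun j => c j - 1) (∑ j ∈ u, c j - (δ + #u)) (by omega)
  have hec : ∀ j ∈ u, f j + 1 ≤ c j := fun j hj => by
    have h₁ : f j ≤ c j - 1 := hfc j
    have h₂ := hc j hj
    omega
  have hsum : ∑ j ∈ u, (c j - (f j + 1)) + ∑ j ∈ u, f j + #u = ∑ j ∈ u, c j := by
    rw [card_eq_sum_ones, ← sum_add_distrib, ← sum_add_distrib]
    exact sum_congr rfl fun j hj => by have := hec j hj; omega
  calc (dualWeightClass C u c).ncard ≤ ∏ j ∈ u, #(nrtWeightFinset b (f j + 1)) :=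
        ncard_dualWeightClass_le_prod hb hnet hec (by omega)
    _ = (b - 1) ^ #u * b ^ (∑ j ∈ u, c j - (δ + #u)) := by
        rw [prod_congr rfl fun j _ => card_nrtWeightFinset_succ hb (f j), prod_mul_distrib,
          prod_const, prod_pow_eq_pow_sum, hf]

end WeightClass

theorem stmt_10_general (b s m n : ℕ) (hb : b.Prime)
    (C : Fin s → Matrix (Fin n) (Fin m) (ZMod b))
    (u : Finset (Fin s)) (hu : u.Nonempty) (tu : ℕ)
    (hnet : ∀ k : Fin s → ℕ, k ∈ dualNet C → k ≠ 0 → (∀ j, j ∉ u → k j = 0) →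
      m - tu + 1 ≤ ∑ j, nrtWeight b (k j))
    (c : Fin s → ℕ) (hc : ∀ j ∈ u, 1 ≤ c j) :
    ((∑ j ∈ u, c j) ≤ m - tu →
      {k : Fin s → ℕ | k ∈ dualNet C ∧ (∀ j ∈ u, nrtWeight b (k j) = c j) ∧
        ∀ j, j ∉ u → k j = 0}.ncard = 0) ∧
    (m - tu < (∑ j ∈ u, c j) → (∑ j ∈ u, c j) ≤ m - tu + u.card →
      ({k : Fin s → ℕ | k ∈ dualNet C ∧ (∀ j ∈ u, nrtWeight b (k j) = c j) ∧
          ∀ j, j ∉ u → k j = 0}.ncard : ℝ)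
        ≤ ((b : ℝ) - 1) ^ ((∑ j ∈ u, c j) - (m - tu))) ∧
    (m - tu + u.card < (∑ j ∈ u, c j) →
      ({k : Fin s → ℕ | k ∈ dualNet C ∧ (∀ j ∈ u, nrtWeight b (k j) = c j) ∧
          ∀ j, j ∉ u → k j = 0}.ncard : ℝ)
        ≤ ((b : ℝ) - 1) ^ u.card * (b : ℝ) ^ ((∑ j ∈ u, c j) - (m - tu + u.card))) ∧
    ({k : Fin s → ℕ | k ∈ dualNet C ∧ (∀ j ∈ u, nrtWeight b (k j) = c j) ∧
        ∀ j, j ∉ u → k j = 0}.ncard : ℝ)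
      ≤ (((b : ℝ) - 1) / b) * (b : ℝ) ^ ((∑ j ∈ u, c j) - (m - tu)) := by
  have hb1 : 1 < b := hb.one_lt
  have hbR : (1 : ℝ) ≤ b := by exact_mod_cast hb1.le
  have hcast : ((b - 1 : ℕ) : ℝ) = b - 1 := by rw [Nat.cast_sub hb1.le, Nat.cast_one]
  have hnet' : MinDualWeightGt C u (m - tu) := hnet
  have small : ∑ j ∈ u, c j ≤ m - tu → (dualWeightClass C u c).ncard = 0 := fun h => by
    rw [dualWeightClass_eq_empty hu hnet' hc h, Set.ncard_empty]
  have medium : ∑ j ∈ u, c j ≤ m - tu + #u →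
      ((dualWeightClass C u c).ncard : ℝ) ≤ ((b : ℝ) - 1) ^ (∑ j ∈ u, c j - (m - tu)) := fun h => by
    rw [← hcast]
    exact_mod_cast ncard_dualWeightClass_le_sub_one_pow hb1 hnet' hc h
  have large : m - tu + #u ≤ ∑ j ∈ u, c j → ((dualWeightClass C u c).ncard : ℝ) ≤
      ((b : ℝ) - 1) ^ #u * (b : ℝ) ^ (∑ j ∈ u, c j - (m - tu + #u)) := fun h => by
    rw [← hcast]
    exact_mod_cast ncard_dualWeightClass_le_sub_one_pow_mul_pow hb1 hnet' hc h
  refine ⟨small, fun _ => medium, fun h => large h.le, ?_⟩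
  change ((dualWeightClass C u c).ncard : ℝ) ≤ _
  rcases le_or_gt (∑ j ∈ u, c j) (m - tu) with h₁ | h₁
  · rw [small h₁, Nat.cast_zero]
    positivity
  rcases le_or_gt (∑ j ∈ u, c j) (m - tu + #u) with h₂ | h₂
  · have key := sub_one_pow_mul_pow_le hbR (p := ∑ j ∈ u, c j - (m - tu)) (by omega) le_rfl
    rw [Nat.sub_self, pow_zero, mul_one] at key
    exact (medium h₂).trans key
  · have key := sub_one_pow_mul_pow_le hbR hu.card_pos (E := ∑ j ∈ u, c j - (m - tu)) (by omega)
    rw [Nat.sub_sub] at key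
    exact (large h₂.le).trans key

/-- Counting bound for dual-net elements of prescribed NRT weights.
The hypothesis `hnet` states (via the dual-net characterization of the
`t`-value) that the projection of the net onto the coordinates in `u` is a
digital `(t_u, m, |u|)`-net in base `b`: every nonzero dual element supported
on `u` has total NRT weight at least `m - t_u + 1`. -/
theorem stmt_10 (b s m n : ℕ) (hb : b.Prime) (hm : 0 < m)
    (C : Fin s → Matrix (Fin n) (Fin m) (ZMod b))
    (u : Finset (Fin s)) (hu : u.Nonempty) (tu : ℕ) (htu : tu ≤ m)
    (hnet : ∀ k : Fin s → ℕ, k ∈ dualNet C → k ≠ 0 → (∀ j, j ∉ u → k j = 0) →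
      m - tu + 1 ≤ ∑ j, nrtWeight b (k j))
    (c : Fin s → ℕ) (hc : ∀ j ∈ u, 1 ≤ c j) :
    ((∑ j ∈ u, c j) ≤ m - tu →
      {k : Fin s → ℕ | k ∈ dualNet C ∧ (∀ j ∈ u, nrtWeight b (k j) = c j) ∧
        ∀ j, j ∉ u → k j = 0}.ncard = 0) ∧
    (m - tu < (∑ j ∈ u, c j) → (∑ j ∈ u, c j) ≤ m - tu + u.card →
      ({k : Fin s → ℕ | k ∈ dualNet C ∧ (∀ j ∈ u, nrtWeight b (k j) = c j) ∧
          ∀ j, j ∉ u → k j = 0}.ncard : ℝ)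
        ≤ ((b : ℝ) - 1) ^ ((∑ j ∈ u, c j) - (m - tu))) ∧
    (m - tu + u.card < (∑ j ∈ u, c j) →
      ({k : Fin s → ℕ | k ∈ dualNet C ∧ (∀ j ∈ u, nrtWeight b (k j) = c j) ∧
          ∀ j, j ∉ u → k j = 0}.ncard : ℝ)
        ≤ ((b : ℝ) - 1) ^ u.card * (b : ℝ) ^ ((∑ j ∈ u, c j) - (m - tu + u.card))) ∧
    ({k : Fin s → ℕ | k ∈ dualNet C ∧ (∀ j ∈ u, nrtWeight b (k j) = c j) ∧
        ∀ j, j ∉ u → k j = 0}.ncard : ℝ)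
      ≤ (((b : ℝ) - 1) / b) * (b : ℝ) ^ ((∑ j ∈ u, c j) - (m - tu)) :=
  stmt_10_general b s m n hb C u hu tu hnet c hc
end

section
/- Let b be a prime, m a positive integer, and C_1,...,C_s ∈ F_b^{m×m} non-singular generating matrices of a digital net P. For any k = (k_1,...,k_s) ∈ ℕ_0^s such that k_j ≥ b^m for at least one index j, the probability that k lies in the dual net of P(L_1 C_1, ..., L_s C_s), when L_1,...,L_s are drawn independently and uniformly from lower-triangular matrices over F_b with nonzero diagonal entries (with sufficiently many rows n), equals exactly 1/b^m. -/
/-- An `n × m` matrix over `F_b` is lower triangular with nonzero diagonal. -/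
def IsLowTri {b n m : ℕ} (L : Matrix (Fin n) (Fin m) (ZMod b)) : Prop :=
  (∀ (i : Fin n) (j : Fin m), (i : ℕ) < (j : ℕ) → L i j = 0) ∧
  ∀ (i : Fin n) (j : Fin m), (i : ℕ) = (j : ℕ) → L i j ≠ 0

/-!
Write `Φ(L) = ∑ⱼ (Lⱼ Cⱼ)ᵀ k⃗ⱼ`, an additive map from tuples of matrices to `F_b^m`. Pick `j` with
`k_j ≥ b^m` and let `v = ⌊log_b k_j⌋ ≥ m` be the position of its leading digit `d ≠ 0`. Row `v`
of `L_j` lies below the diagonal of the `n × m` matrix, so adding any `r` to it keeps `L`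
lower triangular with nonzero diagonal, and it changes `Φ(L)` by `d • C_jᵀ r`. Since `C_j` is
invertible, the translations by these row vectors act simply transitively on the values of `Φ`,
so the admissible `L` split into `b^m` equinumerous fibres of `Φ`, one of which is the event
`Φ(L) = 0`.
-/

open Matrix

lemma digitVec_log_ne_zero {b K : ℕ} (hb : b.Prime) (hK : K ≠ 0) :
    digitVec b K (Nat.log b K) ≠ 0 := by
  have hne : Nat.digits b K ≠ [] := Nat.digits_ne_nil_iff_ne_zero.mpr hK
  have hlen : (Nat.digits b K).length = Nat.log b K + 1 := Nat.length_digits b K hb.one_lt hK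
  have htop : (Nat.digits b K).getD (Nat.log b K) 0 = (Nat.digits b K).getLast hne := by
    rw [List.getLast_eq_getElem, List.getD_eq_getElem _ _ (by omega)]
    simp only [hlen, Nat.add_sub_cancel]
  have hlt : (Nat.digits b K).getLast hne < b :=
    Nat.digits_lt_base hb.one_lt (List.getLast_mem hne)
  rw [digitVec, htop, Ne, ZMod.natCast_eq_zero_iff]
  exact fun hdvd => Nat.getLast_digit_ne_zero b hK (Nat.eq_zero_of_dvd_of_lt hdvd hlt)

lemma exists_isLowTri (b n m : ℕ) [Fact (1 < b)] :
    ∃ L : Matrix (Fin n) (Fin m) (ZMod b), IsLowTri L :=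
  ⟨of fun i c => if (i : ℕ) = c then 1 else 0,
    fun i c hic => if_neg hic.ne, fun i c hic => by simp [hic]⟩

lemma IsLowTri.add_vecMulVec_single {b n m : ℕ} {L : Matrix (Fin n) (Fin m) (ZMod b)}
    (hL : IsLowTri L) {v : Fin n} (hv : m ≤ v) (r : Fin m → ZMod b) :
    IsLowTri (L + vecMulVec (Pi.single v 1) r) := by
  have hrow : ∀ (i : Fin n) (c : Fin m), (i : ℕ) ≤ c →
      (L + vecMulVec (Pi.single v 1) r) i c = L i c := fun i c hic => by
    have : i ≠ v := fun h => by have := c.isLt; omega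
    simp [vecMulVec_apply, this]
  exact ⟨fun i c hic => (hrow i c hic.le).trans (hL.1 i c hic),
    fun i c hic => (hrow i c hic.le).trans_ne (hL.2 i c hic)⟩

lemma isLowTri_add_single_vecMulVec {b s n m : ℕ} {L : Fin s → Matrix (Fin n) (Fin m) (ZMod b)}
    (hL : ∀ j, IsLowTri (L j)) (j : Fin s) {v : Fin n} (hv : m ≤ v) (r : Fin m → ZMod b) :
    ∀ j', IsLowTri (L j' + Pi.single (M := fun _ => Matrix _ _ _) j
      (vecMulVec (Pi.single v 1) r) j') := by
  intro j'
  rcases eq_or_ne j' j with rfl | hj'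
  · simpa only [Pi.single_eq_same] using (hL j').add_vecMulVec_single hv r
  · simpa [hj'] using hL j'

section Torsor

variable {X G : Type*} [AddGroup X] [AddGroup G] (Φ : X →+ G) (ψ : G →+ X)
  (hψ : ∀ g, Φ (ψ g) = g) {S : Set X} (hS : ∀ x ∈ S, ∀ g, x + ψ g ∈ S)

def sepZeroProdEquiv : ({x ∈ S | Φ x = 0} × G) ≃ S where
  toFun p := ⟨p.1 + ψ p.2, hS _ p.1.2.1 _⟩
  invFun y := (⟨y + ψ (-Φ y), hS _ y.2 _, by simp [hψ]⟩, Φ y)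
  left_inv := by
    rintro ⟨⟨x, hxS, hx⟩, g⟩
    have hΦ : Φ (x + ψ g) = g := by rw [map_add, hψ, hx, zero_add]
    ext <;> simp [hΦ, add_assoc]
  right_inv := by
    rintro ⟨y, hy⟩
    ext; simp [add_assoc]

include hψ hS in
theorem ncard_sep_eq_zero_div_ncard [Finite X] [Fintype G] (hne : S.Nonempty) :
    ({x ∈ S | Φ x = 0}.ncard : ℝ) / S.ncard = 1 / Fintype.card G := by
  have hcard : S.ncard = {x ∈ S | Φ x = 0}.ncard * Fintype.card G := by
    rw [← Nat.card_coe_set_eq, ← Nat.card_congr (sepZeroProdEquiv Φ ψ hψ hS), Nat.card_prod,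
      Nat.card_coe_set_eq, Nat.card_eq_fintype_card]
  have hpos : 0 < S.ncard := (Set.ncard_pos (Set.toFinite S)).mpr hne
  rw [hcard] at hpos ⊢
  have : (0 : ℝ) < {x ∈ S | Φ x = 0}.ncard := by exact_mod_cast Nat.pos_of_mul_pos_right hpos
  push_cast
  field_simp

end Torsor

def dualNetSum {b s m n : ℕ} (C : Fin s → Matrix (Fin m) (Fin m) (ZMod b)) (k : Fin s → ℕ) :
    (Fin s → Matrix (Fin n) (Fin m) (ZMod b)) →+ (Fin m → ZMod b) :=
  AddMonoidHom.mk' (fun L => ∑ j, (L j * C j)ᵀ *ᵥ fun i : Fin n => digitVec b (k j) i)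
    fun L L' => by simp only [Pi.add_apply, Matrix.add_mul, transpose_add, add_mulVec,
      Finset.sum_add_distrib]

lemma dualNetSum_single_vecMulVec {b s m n : ℕ} (C : Fin s → Matrix (Fin m) (Fin m) (ZMod b))
    (k : Fin s → ℕ) (j : Fin s) (v : Fin n) (r : Fin m → ZMod b) :
    dualNetSum C k (Pi.single j (vecMulVec (Pi.single v 1) r)) =
      digitVec b (k j) v • (C j)ᵀ *ᵥ r := by
  rw [dualNetSum, AddMonoidHom.mk'_apply, Fintype.sum_eq_single j fun j' hj' => by simp [hj'],
    Pi.single_eq_same, transpose_mul, ← mulVec_mulVec, mulVec_transpose (vecMulVec _ r),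
    vecMul_vecMulVec, dotProduct_single_one, mulVec_smul]

theorem stmt_12_general (b s m n : ℕ) (hb : b.Prime)
    (C : Fin s → Matrix (Fin m) (Fin m) (ZMod b)) (hC : ∀ j, IsUnit (C j))
    (k : Fin s → ℕ) (hbig : ∃ j, b ^ m ≤ k j) (hfit : ∀ j, k j < b ^ n) :
    ({L : Fin s → Matrix (Fin n) (Fin m) (ZMod b) |
        (∀ j, IsLowTri (L j)) ∧ k ∈ dualNet (fun j => L j * C j)}.ncard : ℝ) /
      ({L : Fin s → Matrix (Fin n) (Fin m) (ZMod b) |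
        ∀ j, IsLowTri (L j)}.ncard : ℝ)
      = 1 / (b : ℝ) ^ m := by
  have : Fact b.Prime := ⟨hb⟩
  obtain ⟨j, hj⟩ := hbig
  have hK : k j ≠ 0 := ((pow_pos hb.pos m).trans_le hj).ne'
  set v : Fin n := ⟨Nat.log b (k j), Nat.log_lt_of_lt_pow hK (hfit j)⟩
  have hvm : m ≤ v := (Nat.le_log_iff_pow_le hb.one_lt hK).mpr hj
  have hd : digitVec b (k j) v ≠ 0 := digitVec_log_ne_zero hb hK
  let ψ : (Fin m → ZMod b) →+ (Fin s → Matrix (Fin n) (Fin m) (ZMod b)) :=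
    AddMonoidHom.mk'
      (fun t => Pi.single j <|
        vecMulVec (Pi.single v 1) ((digitVec b (k j) v)⁻¹ • ((C j)⁻¹)ᵀ *ᵥ t))
      fun t t' => by simp only [mulVec_add, smul_add, vecMulVec_add, Pi.single_add]
  have hψ : ∀ t, dualNetSum C k (ψ t) = t := fun t => by
    rw [AddMonoidHom.mk'_apply, dualNetSum_single_vecMulVec, mulVec_smul, smul_smul,
      mul_inv_cancel₀ hd, one_smul, mulVec_mulVec, ← transpose_mul,
      nonsing_inv_mul _ ((isUnit_iff_isUnit_det _).mp (hC j)), transpose_one, one_mulVec]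
  have hS : ∀ L ∈ {L : Fin s → Matrix (Fin n) (Fin m) (ZMod b) | ∀ j, IsLowTri (L j)},
      ∀ t, L + ψ t ∈ {L | ∀ j, IsLowTri (L j)} :=
    fun L hL t => isLowTri_add_single_vecMulVec hL j hvm _
  have hne : {L : Fin s → Matrix (Fin n) (Fin m) (ZMod b) | ∀ j, IsLowTri (L j)}.Nonempty :=
    let ⟨L, hL⟩ := exists_isLowTri b n m
    ⟨fun _ => L, fun _ => hL⟩
  have hset : {L : Fin s → Matrix (Fin n) (Fin m) (ZMod b) |
      (∀ j, IsLowTri (L j)) ∧ k ∈ dualNet (fun j => L j * C j)} =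
      {L ∈ {L | ∀ j, IsLowTri (L j)} | dualNetSum C k L = 0} := rfl
  rw [hset, ncard_sep_eq_zero_div_ncard _ ψ hψ hS hne, Fintype.card_fun, ZMod.card,
    Fintype.card_fin, Nat.cast_pow]

/-- For nonsingular square generating matrices `C j` and a vector `k` with some
component `k j ≥ b^m` (and enough rows `n` so that all digits of the `k j` are
seen), the probability that `k` lies in the dual of the randomly linearly
scrambled net equals exactly `1 / b^m`. -/
theorem stmt_12 (b s m n : ℕ) (hb : b.Prime) (hm : 0 < m) (hmn : m ≤ n)
    (C : Fin s → Matrix (Fin m) (Fin m) (ZMod b)) (hC : ∀ j, IsUnit (C j))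
    (k : Fin s → ℕ) (hbig : ∃ j, b ^ m ≤ k j) (hfit : ∀ j, k j < b ^ n) :
    ({L : Fin s → Matrix (Fin n) (Fin m) (ZMod b) |
        (∀ j, IsLowTri (L j)) ∧ k ∈ dualNet (fun j => L j * C j)}.ncard : ℝ) /
      ({L : Fin s → Matrix (Fin n) (Fin m) (ZMod b) |
        ∀ j, IsLowTri (L j)}.ncard : ℝ)
      = 1 / (b : ℝ) ^ m :=
  stmt_12_general b s m n hb C hC k hbig hfit
end

section
/- Let b be a prime and m, s positive integers. For any nonzero k ∈ ℕ_0^s, the probability that k lies in the dual P^⊥(p, g) = {k : k(x)·g(x) ≡ 0 mod p(x)} of a random infinite-precision polynomial lattice point set, where p is uniform over monic irreducible polynomials of degree m over F_b and g is uniform over (G_m)^s, is at most 3 μ_1(k) / (b^m − 1), where μ_1(k) = ∑_j μ_1(k_j) is the total NRT weight. -/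
/-! Write `K_j` for the digit polynomial of `k_j` and fix `j₀` with `K_{j₀} ≠ 0`. For a fixed monic
irreducible `p` of degree `m`, the condition `p ∣ ∑ K_j g_j` is a linear congruence modulo `p`.
If `p ∤ K_{j₀}`, then for each choice of the other coordinates at most one `g_{j₀}` of degree `< m`
solves it, so the congruence holds for at most a fraction `1 / (b^m - 1)` of the `g`. Otherwise
`p` is one of at most `deg K_{j₀} / m` irreducible factors of `K_{j₀}`, whereas there are at least
`b^m / (2m)` monic irreducibles of degree `m`: the elements of `𝔽_{b^m}` of smaller degree lie in
proper subfields, which together have at most `b^m / 2` elements. Hence the probability is at most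
`(2 deg K_{j₀} + 1) / (b^m - 1)`, and `deg K_{j₀} < μ₁(k_{j₀}) ≤ μ₁(k)`. -/

open Polynomial

/-- The polynomial over `F_b` whose coefficients are the base-`b` digits of `k`. -/
noncomputable def natPoly (b k : ℕ) : Polynomial (ZMod b) :=
  ∑ i ∈ Finset.range (Nat.digits b k).length,
    Polynomial.C (((Nat.digits b k).getD i 0 : ℕ) : ZMod b) * Polynomial.X ^ i

namespace Set

theorem ncard_univ_pi {ι : Type*} [Fintype ι] {α : ι → Type*} (t : ∀ i, Set (α i)) :
    (univ.pi t).ncard = ∏ i, (t i).ncard := by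
  rw [← Nat.card_coe_set_eq, Nat.card_congr (Equiv.Set.univPi t), Nat.card_pi]
  simp only [Nat.card_coe_set_eq]

theorem ncard_setOf_fst_mem_le_sum {α β : Type*} {s : Set α} (hs : s.Finite)
    (Q : α → β → Prop) :
    {x : α × β | x.1 ∈ s ∧ Q x.1 x.2}.ncard ≤ ∑ a ∈ hs.toFinset, {b | Q a b}.ncard := by
  have hS : {x : α × β | x.1 ∈ s ∧ Q x.1 x.2} = ⋃ a ∈ hs.toFinset, {a} ×ˢ {b | Q a b} := by
    ext ⟨a, b⟩
    simp
  rw [hS]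
  refine (Finset.set_ncard_biUnion_le _ _).trans_eq ?_
  simp only [ncard_prod, ncard_singleton, one_mul]

end Set

section DigitPolynomial

variable {b k : ℕ}

theorem natPoly_coeff {i : ℕ} (hi : i < (Nat.digits b k).length) :
    (natPoly b k).coeff i = ((Nat.digits b k)[i] : ZMod b) := by
  rw [natPoly, finsetSum_coeff, Finset.sum_eq_single_of_mem i (Finset.mem_range.mpr hi)]
  · simp [List.getElem?_eq_getElem hi]
  · intro j _ hji
    simp [coeff_X_pow, hji.symm]

theorem natPoly_natDegree_lt (hk : k ≠ 0) : (natPoly b k).natDegree < nrtWeight b k := by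
  have hpos : 0 < nrtWeight b k := List.length_pos_iff.mpr (Nat.digits_ne_nil_iff_ne_zero.mpr hk)
  refine (natDegree_sum_le_of_forall_le _ _ fun i hi ↦ ?_).trans_lt (Nat.sub_one_lt hpos.ne')
  exact (natDegree_C_mul_X_pow_le _ _).trans (Nat.le_sub_one_of_lt (Finset.mem_range.mp hi))

theorem natPoly_ne_zero (hb : 1 < b) (hk : k ≠ 0) : natPoly b k ≠ 0 := by
  have hne : Nat.digits b k ≠ [] := Nat.digits_ne_nil_iff_ne_zero.mpr hk
  intro h
  have hlast := natPoly_coeff (Nat.sub_one_lt (List.length_pos_iff.mpr hne).ne')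
  rw [h, coeff_zero, ← List.getLast_eq_getElem hne, eq_comm,
    ZMod.natCast_eq_zero_iff] at hlast
  exact Nat.getLast_digit_ne_zero b hk
    (Nat.eq_zero_of_dvd_of_lt hlast (Nat.digits_lt_base hb (List.getLast_mem hne)))

end DigitPolynomial

theorem Nat.sum_Icc_pow_add_two_le {q : ℕ} (hq : 2 ≤ q) (n : ℕ) :
    ∑ d ∈ Finset.Icc 1 n, q ^ d + 2 ≤ 2 * q ^ n := by
  induction n with
  | zero => simp
  | succ n ih =>
    rw [Finset.sum_Icc_succ_top (by omega), pow_succ]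
    nlinarith [Nat.mul_le_mul_left (q ^ n) hq]

theorem Nat.two_mul_sum_pow_properDivisors_le {q : ℕ} (hq : 2 ≤ q) (m : ℕ) :
    2 * ∑ d ∈ m.properDivisors, q ^ d ≤ q ^ m := by
  have hsub : m.properDivisors ⊆ Finset.Icc 1 (m / 2) := fun d hd ↦ by
    obtain ⟨⟨c, rfl⟩, hlt⟩ := Nat.mem_properDivisors.mp hd
    have hc : 2 ≤ c := by
      rcases c with _ | _ | c <;> simp_all
    exact Finset.mem_Icc.mpr ⟨Nat.pos_of_mem_properDivisors hd,
      (Nat.le_div_iff_mul_le two_pos).mpr (Nat.mul_le_mul_left d hc)⟩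
  have hsum := Finset.sum_le_sum_of_subset (f := (q ^ ·)) hsub
  have hIcc := Nat.sum_Icc_pow_add_two_le hq (m / 2)
  have hsq : q ^ (m / 2) * q ^ (m / 2) ≤ q ^ m := by
    rw [← pow_add]
    exact Nat.pow_le_pow_right (by omega) (by omega)
  have hx : 4 * q ^ (m / 2) ≤ q ^ (m / 2) * q ^ (m / 2) + 4 := by
    zify
    nlinarith [sq_nonneg ((q : ℤ) ^ (m / 2) - 2)]
  linarith

namespace Polynomial

section Semiring

variable (R : Type*) [Semiring R] (m : ℕ)

def monicIrreducibleOfDegree : Set R[X] := {p | p.Monic ∧ Irreducible p ∧ p.natDegree = m}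

def nonzeroDegreeLT : Set R[X] := {g | g ≠ 0 ∧ g.natDegree < m}

variable (ι : Type*)

def latticePairs : Set (R[X] × (ι → R[X])) :=
  {pg | pg.1 ∈ monicIrreducibleOfDegree R m ∧ ∀ j, pg.2 j ∈ nonzeroDegreeLT R m}

variable {ι} [Fintype ι]

/-- The pairs `(p, g)` whose dual lattice `P^⊥(p, g)` contains the vector with digit polynomials
`K`. -/
def dualPairs (K : ι → R[X]) : Set (R[X] × (ι → R[X])) :=
  {pg | pg.1 ∈ monicIrreducibleOfDegree R m ∧ (∀ j, pg.2 j ∈ nonzeroDegreeLT R m) ∧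
    pg.1 ∣ ∑ j, K j * pg.2 j}

end Semiring

variable {F : Type*} [Field F] {ι : Type*} [Fintype ι]

theorem eq_of_dvd_mul_sub {p a f g : F[X]} (hp : Prime p) (ha : ¬p ∣ a) (h : p ∣ a * (f - g))
    (hf : f.degree < p.degree) (hg : g.degree < p.degree) : f = g :=
  sub_eq_zero.mp <| eq_zero_of_dvd_of_degree_lt ((hp.dvd_or_dvd h).resolve_left ha)
    ((degree_sub_le f g).trans_lt (max_lt hf hg))

theorem eq_of_dvd_sum_mul_of_eq_of_ne {p : F[X]} (hp : Prime p)
    {K g g' : ι → F[X]} {j₀ : ι} (hK : ¬p ∣ K j₀) (hg : p ∣ ∑ j, K j * g j)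
    (hg' : p ∣ ∑ j, K j * g' j) (hdeg : (g j₀).degree < p.degree)
    (hdeg' : (g' j₀).degree < p.degree) (heq : ∀ j, j ≠ j₀ → g j = g' j) : g = g' := by
  have hdiff : ∑ j, K j * g j - ∑ j, K j * g' j = K j₀ * (g j₀ - g' j₀) := by
    rw [← Finset.sum_sub_distrib, Finset.sum_eq_single j₀ (fun j _ hj ↦ by rw [heq j hj, sub_self])
      (fun h ↦ (h (Finset.mem_univ _)).elim), mul_sub]
  have hj₀ := eq_of_dvd_mul_sub hp hK (hdiff ▸ dvd_sub hg hg') hdeg hdeg'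
  funext j
  by_cases hj : j = j₀
  · exact hj ▸ hj₀
  · exact heq j hj

theorem ncard_setOf_dvd_sum_mul_le {p : F[X]} (hp : Prime p)
    {K : ι → F[X]} {j₀ : ι} (hK : ¬p ∣ K j₀) {S : Set F[X]} (hS : S.Finite)
    (hSdeg : ∀ g ∈ S, g.degree < p.degree) :
    {g : ι → F[X] | (∀ j, g j ∈ S) ∧ p ∣ ∑ j, K j * g j}.ncard ≤
      S.ncard ^ (Fintype.card ι - 1) := by
  classical
  calc _ ≤ (Set.univ.pi fun _ : {j // j ≠ j₀} ↦ S).ncard := by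
        refine Set.ncard_le_ncard_of_injOn (fun g j ↦ g j) (fun g hg j _ ↦ hg.1 j)
          (fun g hg g' hg' h ↦ ?_) (Set.Finite.pi fun _ ↦ hS)
        exact eq_of_dvd_sum_mul_of_eq_of_ne hp hK hg.2 hg'.2 (hSdeg _ (hg.1 j₀))
          (hSdeg _ (hg'.1 j₀)) fun j hj ↦ congrFun h ⟨j, hj⟩
    _ = S.ncard ^ (Fintype.card ι - 1) := by
        simp [Set.ncard_univ_pi, Fintype.card_subtype_compl]

theorem sum_natDegree_le_of_forall_dvd {f : F[X]} (hf : f ≠ 0) {B : Finset F[X]}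
    (hB : ∀ p ∈ B, p.Monic ∧ Irreducible p) (hdvd : ∀ p ∈ B, p ∣ f) :
    ∑ p ∈ B, p.natDegree ≤ f.natDegree := by
  have hprod : ∏ p ∈ B, p ∣ f := by
    refine Finset.prod_dvd_of_coprime (fun p hp q hq hpq ↦ ?_) hdvd
    refine ((hB p hp).2.coprime_iff_not_dvd).mpr fun hpq' ↦ hpq ?_
    exact eq_of_monic_of_associated (hB p hp).1 (hB q hq).1
      ((hB p hp).2.associated_of_dvd (hB q hq).2 hpq')
  rw [← natDegree_prod _ _ fun p hp ↦ (hB p hp).2.ne_zero]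
  exact natDegree_le_of_dvd hprod hf

theorem natDegree_mul_ncard_setOf_dvd_le {m : ℕ} {f : F[X]} (hf : f ≠ 0) :
    m * {p | p ∈ monicIrreducibleOfDegree F m ∧ p ∣ f}.ncard ≤ f.natDegree := by
  by_cases hfin : {p | p ∈ monicIrreducibleOfDegree F m ∧ p ∣ f}.Finite
  · have hmem : ∀ p ∈ hfin.toFinset, p ∈ monicIrreducibleOfDegree F m ∧ p ∣ f :=
      fun p hp ↦ hfin.mem_toFinset.mp hp
    calc m * _ = ∑ p ∈ hfin.toFinset, p.natDegree := by
          rw [Set.ncard_eq_toFinset_card _ hfin, Finset.sum_congr rfl fun p hp ↦ (hmem p hp).1.2.2,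
            Finset.sum_const, smul_eq_mul, mul_comm]
      _ ≤ f.natDegree := sum_natDegree_le_of_forall_dvd hf
          (fun p hp ↦ ⟨(hmem p hp).1.1, (hmem p hp).1.2.1⟩) fun p hp ↦ (hmem p hp).2
  · simp [Set.Infinite.ncard hfin]

theorem nonzeroDegreeLT_eq_degreeLT_sdiff (m : ℕ) :
    nonzeroDegreeLT F m = (degreeLT F m : Set F[X]) \ {0} := by
  ext g
  simp only [nonzeroDegreeLT, Set.mem_ofPred_eq, Set.mem_sdiff, SetLike.mem_coe, mem_degreeLT,
    Set.mem_singleton_iff]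
  exact ⟨fun ⟨h0, hd⟩ ↦ ⟨(natDegree_lt_iff_degree_lt h0).mp hd, h0⟩,
    fun ⟨hd, h0⟩ ↦ ⟨h0, (natDegree_lt_iff_degree_lt h0).mpr hd⟩⟩

theorem degree_lt_of_mem_nonzeroDegreeLT {m : ℕ} {p g : F[X]}
    (hp : p ∈ monicIrreducibleOfDegree F m) (hg : g ∈ nonzeroDegreeLT F m) :
    g.degree < p.degree := by
  rw [degree_eq_natDegree hp.1.ne_zero, hp.2.2]
  exact (natDegree_lt_iff_degree_lt hg.1).mp hg.2

variable (F) in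
theorem ncard_nonzeroDegreeLT (m : ℕ) : (nonzeroDegreeLT F m).ncard = Nat.card F ^ m - 1 := by
  rw [nonzeroDegreeLT_eq_degreeLT_sdiff, Set.ncard_sdiff_singleton_of_mem (by simp),
    ← Nat.card_coe_set_eq, SetLike.coe_sort_coe, Nat.card_congr (degreeLTEquiv F m).toEquiv,
    Nat.card_fun, Nat.card_eq_fintype_card (α := Fin m), Fintype.card_fin]

theorem ncard_setOf_forall_mem_nonzeroDegreeLT (m : ℕ) :
    {g : ι → F[X] | ∀ j, g j ∈ nonzeroDegreeLT F m}.ncard =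
      (Nat.card F ^ m - 1) ^ Fintype.card ι := by
  rw [← ncard_nonzeroDegreeLT F m, ← Finset.card_univ, ← Finset.prod_const, ← Set.ncard_univ_pi]
  congr 1
  ext g
  simp

theorem ncard_latticePairs (m : ℕ) :
    (latticePairs F m ι).ncard =
      (monicIrreducibleOfDegree F m).ncard * (Nat.card F ^ m - 1) ^ Fintype.card ι := by
  rw [← ncard_setOf_forall_mem_nonzeroDegreeLT, ← Set.ncard_prod]
  rfl

section Finite

variable [Finite F]

variable (F) in
theorem finite_degreeLT (m : ℕ) : (degreeLT F m : Set F[X]).Finite :=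
  Set.finite_coe_iff.mp (Finite.of_equiv _ (degreeLTEquiv F m).toEquiv.symm)

variable (F) in
theorem finite_nonzeroDegreeLT (m : ℕ) : (nonzeroDegreeLT F m).Finite := by
  rw [nonzeroDegreeLT_eq_degreeLT_sdiff]
  exact (finite_degreeLT F m).sdiff

variable (F) in
theorem finite_monicIrreducibleOfDegree (m : ℕ) : (monicIrreducibleOfDegree F m).Finite := by
  refine (finite_degreeLT F (m + 1)).subset fun p ⟨hmon, _, hdeg⟩ ↦ ?_
  rw [SetLike.mem_coe, mem_degreeLT, degree_eq_natDegree hmon.ne_zero, hdeg]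
  exact_mod_cast m.lt_succ_self

theorem ncard_setOf_natDegree_minpoly_eq_le (m : ℕ) (L : Type*) [Field L] [Algebra F L] [Finite L] :
    {α : L | (minpoly F α).natDegree = m}.ncard ≤ m * (monicIrreducibleOfDegree F m).ncard := by
  classical
  have hP := finite_monicIrreducibleOfDegree F m
  have hsub : {α : L | (minpoly F α).natDegree = m} ⊆ ⋃ f ∈ hP.toFinset, f.rootSet L := by
    intro α hα
    have hint : IsIntegral F α := .of_finite F α
    simp only [Set.mem_iUnion, Set.Finite.mem_toFinset, exists_prop]
    exact ⟨minpoly F α, ⟨minpoly.monic hint, minpoly.irreducible hint, hα⟩,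
      (mem_rootSet.mpr ⟨minpoly.ne_zero hint, minpoly.aeval F α⟩)⟩
  calc _ ≤ (⋃ f ∈ hP.toFinset, f.rootSet L).ncard := Set.ncard_le_ncard hsub (Set.toFinite _)
    _ ≤ ∑ f ∈ hP.toFinset, (f.rootSet L).ncard := Finset.set_ncard_biUnion_le _ _
    _ ≤ ∑ _f ∈ hP.toFinset, m := Finset.sum_le_sum fun f hf ↦
        (ncard_rootSet_le f L).trans_eq (hP.mem_toFinset.mp hf).2.2
    _ = m * (monicIrreducibleOfDegree F m).ncard := by
        rw [Finset.sum_const, smul_eq_mul, mul_comm, Set.ncard_eq_toFinset_card _ hP]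

theorem ncard_setOf_natDegree_minpoly_ne_le (L : Type*) [Field L] [Algebra F L] [Finite L] :
    {α : L | (minpoly F α).natDegree ≠ Module.finrank F L}.ncard ≤
      ∑ d ∈ (Module.finrank F L).properDivisors, Nat.card F ^ d := by
  have : Module.Finite F L := .of_finite
  have hsub : {α : L | (minpoly F α).natDegree ≠ Module.finrank F L} ⊆
      ⋃ d ∈ (Module.finrank F L).properDivisors, (X ^ Nat.card F ^ d - X : F[X]).rootSet L := by
    intro α hα
    have hint : IsIntegral F α := .of_finite F α
    have hdvd : (minpoly F α).natDegree ∣ Module.finrank F L := minpoly.degree_dvd hint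
    simp only [Set.mem_iUnion, exists_prop, Nat.mem_properDivisors]
    refine ⟨_, ⟨hdvd, (Nat.le_of_dvd Module.finrank_pos hdvd).lt_of_ne hα⟩, mem_rootSet.mpr
      ⟨FiniteField.X_pow_card_pow_sub_X_ne_zero F (minpoly.natDegree_pos hint).ne'
        Finite.one_lt_card, aeval_eq_zero_of_dvd_aeval_eq_zero ?_ (minpoly.aeval F α)⟩⟩
    exact (minpoly.irreducible hint).natDegree_dvd_iff_dvd_X_pow_card_pow_sub_X.mp dvd_rfl
  calc _ ≤ (⋃ d ∈ (Module.finrank F L).properDivisors,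
          (X ^ Nat.card F ^ d - X : F[X]).rootSet L).ncard :=
        Set.ncard_le_ncard hsub (Set.toFinite _)
    _ ≤ ∑ d ∈ (Module.finrank F L).properDivisors,
          ((X ^ Nat.card F ^ d - X : F[X]).rootSet L).ncard :=
        Finset.set_ncard_biUnion_le _ _
    _ ≤ ∑ d ∈ (Module.finrank F L).properDivisors, Nat.card F ^ d :=
        Finset.sum_le_sum fun d hd ↦ (ncard_rootSet_le _ L).trans_eq
          (FiniteField.X_pow_card_pow_sub_X_natDegree_eq F (Nat.pos_of_mem_properDivisors hd).ne'
            Finite.one_lt_card)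

theorem pow_le_two_mul_mul_ncard_monicIrreducibleOfDegree {m : ℕ} (hm : 0 < m) :
    Nat.card F ^ m ≤ 2 * m * (monicIrreducibleOfDegree F m).ncard := by
  obtain ⟨p, _⟩ := CharP.exists F
  have : Fact p.Prime := ⟨CharP.char_is_prime F p⟩
  have : NeZero m := ⟨hm.ne'⟩
  let L := FiniteField.Extension F p m
  have hcard := Set.ncard_add_ncard_compl {α : L | (minpoly F α).natDegree = m}
  rw [FiniteField.natCard_extension] at hcard
  have heq := ncard_setOf_natDegree_minpoly_eq_le (F := F) m L
  have hne := ncard_setOf_natDegree_minpoly_ne_le (F := F) L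
  rw [FiniteField.finrank_extension] at hne
  have hne' : {α : L | (minpoly F α).natDegree = m}ᶜ.ncard ≤ _ := hne
  have := Nat.two_mul_sum_pow_properDivisors_le (Finite.one_lt_card (α := F)) m
  rw [mul_assoc]
  omega

theorem ncard_setOf_nonzeroDegreeLT_dvd_sum_mul_le {m : ℕ} {p : F[X]}
    (hp : p ∈ monicIrreducibleOfDegree F m) {K : ι → F[X]} {j₀ : ι} (hpK : ¬p ∣ K j₀) :
    {g : ι → F[X] | (∀ j, g j ∈ nonzeroDegreeLT F m) ∧ p ∣ ∑ j, K j * g j}.ncard ≤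
      (Nat.card F ^ m - 1) ^ (Fintype.card ι - 1) := by
  rw [← ncard_nonzeroDegreeLT F m]
  exact ncard_setOf_dvd_sum_mul_le hp.2.1.prime hpK (finite_nonzeroDegreeLT F m)
    fun g hg ↦ degree_lt_of_mem_nonzeroDegreeLT hp hg

theorem ncard_dualPairs_le (m : ℕ) (K : ι → F[X]) (j₀ : ι) :
    (dualPairs F m K).ncard ≤
      {p | p ∈ monicIrreducibleOfDegree F m ∧ p ∣ K j₀}.ncard *
          (Nat.card F ^ m - 1) ^ Fintype.card ι +
        (monicIrreducibleOfDegree F m).ncard * (Nat.card F ^ m - 1) ^ (Fintype.card ι - 1) := by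
  classical
  have hP := finite_monicIrreducibleOfDegree F m
  set G := Nat.card F ^ m - 1
  have hfiber : ∀ p ∈ hP.toFinset,
      {g : ι → F[X] | (∀ j, g j ∈ nonzeroDegreeLT F m) ∧ p ∣ ∑ j, K j * g j}.ncard ≤
        (if p ∣ K j₀ then G ^ Fintype.card ι else 0) + G ^ (Fintype.card ι - 1) := by
    intro p hp
    split_ifs with hpK
    · refine le_add_right ((Set.ncard_le_ncard (fun g hg ↦ hg.1) ?_).trans_eq
        (ncard_setOf_forall_mem_nonzeroDegreeLT m))
      exact (Set.Finite.pi fun _ ↦ finite_nonzeroDegreeLT F m).subset fun g hg j _ ↦ hg j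
    · rw [zero_add]
      exact ncard_setOf_nonzeroDegreeLT_dvd_sum_mul_le (hP.mem_toFinset.mp hp) hpK
  refine (Set.ncard_setOf_fst_mem_le_sum hP
    (fun p (g : ι → F[X]) ↦ (∀ j, g j ∈ nonzeroDegreeLT F m) ∧ p ∣ ∑ j, K j * g j)).trans
    ((Finset.sum_le_sum hfiber).trans_eq ?_)
  rw [Finset.sum_add_distrib, Finset.sum_ite, Finset.sum_const_zero, add_zero, Finset.sum_const,
    Finset.sum_const, smul_eq_mul, smul_eq_mul, ← Set.ncard_eq_toFinset_card _ hP,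
    ← Set.ncard_coe_finset, Finset.coe_filter]
  simp only [Set.Finite.mem_toFinset]

theorem ncard_dualPairs_mul_le {m : ℕ} (hm : 0 < m) (K : ι → F[X]) {j₀ : ι}
    (hK : K j₀ ≠ 0) :
    (dualPairs F m K).ncard * (Nat.card F ^ m - 1) ≤
      (2 * (K j₀).natDegree + 1) *
        ((monicIrreducibleOfDegree F m).ncard * (Nat.card F ^ m - 1) ^ Fintype.card ι) := by
  have hA := ncard_dualPairs_le m K j₀
  have hB := natDegree_mul_ncard_setOf_dvd_le (m := m) hK
  have hG : Nat.card F ^ m - 1 ≤ 2 * m * (monicIrreducibleOfDegree F m).ncard :=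
    (Nat.sub_le _ _).trans (pow_le_two_mul_mul_ncard_monicIrreducibleOfDegree hm)
  set N := (monicIrreducibleOfDegree F m).ncard
  set B := {p | p ∈ monicIrreducibleOfDegree F m ∧ p ∣ K j₀}.ncard
  set G := Nat.card F ^ m - 1
  obtain ⟨s, hs⟩ : ∃ s, Fintype.card ι = s + 1 :=
    Nat.exists_eq_add_one.mpr (Fintype.card_pos_iff.mpr ⟨j₀⟩)
  rw [hs] at hA ⊢
  rw [Nat.add_sub_cancel] at hA
  calc _ ≤ (B * G ^ (s + 1) + N * G ^ s) * G := Nat.mul_le_mul_right _ hA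
    _ = (B * G + N) * G ^ (s + 1) := by ring
    _ ≤ (2 * (K j₀).natDegree + 1) * N * G ^ (s + 1) := Nat.mul_le_mul_right _ (by
        nlinarith [Nat.mul_le_mul_left B hG, Nat.mul_le_mul_right N hB])
    _ = _ := by ring

theorem ncard_dualPairs_div_ncard_latticePairs_le {m : ℕ} (hm : 0 < m) (K : ι → F[X])
    {j₀ : ι} (hK : K j₀ ≠ 0) :
    ((dualPairs F m K).ncard : ℝ) / (latticePairs F m ι).ncard ≤
      (2 * (K j₀).natDegree + 1) / ((Nat.card F : ℝ) ^ m - 1) := by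
  have hq : 2 ≤ Nat.card F ^ m :=
    Finite.one_lt_card.trans_le (Nat.le_self_pow hm.ne' _)
  have hN : 0 < (monicIrreducibleOfDegree F m).ncard := by
    have := pow_le_two_mul_mul_ncard_monicIrreducibleOfDegree (F := F) hm
    exact Nat.pos_of_ne_zero fun h ↦ by rw [h, mul_zero] at this; omega
  have hG : ((Nat.card F ^ m - 1 : ℕ) : ℝ) = (Nat.card F : ℝ) ^ m - 1 := by
    push_cast [Nat.cast_sub (by omega : 1 ≤ Nat.card F ^ m)]
    rfl
  have hGpos : 0 < Nat.card F ^ m - 1 := by omega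
  rw [ncard_latticePairs, ← hG, div_le_div_iff₀ (by positivity) (by positivity)]
  exact_mod_cast ncard_dualPairs_mul_le hm K hK

end Finite

end Polynomial

theorem stmt_14_general (b s m : ℕ) (hb : b.Prime) (hm : 0 < m)
    (k : Fin s → ℕ) (hk : k ≠ 0) :
    ({pg : Polynomial (ZMod b) × (Fin s → Polynomial (ZMod b)) |
        (pg.1.Monic ∧ Irreducible pg.1 ∧ pg.1.natDegree = m) ∧
        (∀ j, pg.2 j ≠ 0 ∧ (pg.2 j).natDegree < m) ∧
        pg.1 ∣ ∑ j, natPoly b (k j) * pg.2 j}.ncard : ℝ) /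
      ({pg : Polynomial (ZMod b) × (Fin s → Polynomial (ZMod b)) |
        (pg.1.Monic ∧ Irreducible pg.1 ∧ pg.1.natDegree = m) ∧
        ∀ j, pg.2 j ≠ 0 ∧ (pg.2 j).natDegree < m}.ncard : ℝ)
      ≤ 3 * (∑ j, nrtWeight b (k j) : ℝ) / ((b : ℝ) ^ m - 1) := by
  have : Fact b.Prime := ⟨hb⟩
  obtain ⟨j₀, hj₀⟩ := Function.ne_iff.mp hk
  have hdeg : 2 * (natPoly b (k j₀)).natDegree + 1 ≤ 3 * ∑ j, nrtWeight b (k j) := by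
    have := (natPoly_natDegree_lt hj₀).trans_le
      (Finset.single_le_sum (f := fun j ↦ nrtWeight b (k j)) (fun j _ ↦ Nat.zero_le _)
        (Finset.mem_univ j₀))
    omega
  calc _ ≤ (2 * (natPoly b (k j₀)).natDegree + 1 : ℝ) / ((Nat.card (ZMod b) : ℝ) ^ m - 1) :=
        ncard_dualPairs_div_ncard_latticePairs_le hm (fun j ↦ natPoly b (k j))
          (natPoly_ne_zero hb.one_lt hj₀)
    _ ≤ _ := by
        rw [Nat.card_zmod]
        exact div_le_div_of_nonneg_right (by exact_mod_cast hdeg)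
          (sub_nonneg.mpr (one_le_pow₀ (by exact_mod_cast hb.one_lt.le)))

/-- For any nonzero `k ∈ ℕ₀^s`, the probability (over uniform monic irreducible
`p` of degree `m` and uniform `g ∈ G_m^s`) that `k` lies in the dual of the
infinite-precision polynomial lattice point set is at most
`3 μ₁(k) / (b^m - 1)`, where `μ₁(k) = ∑_j μ₁(k_j)`. -/
theorem stmt_14 (b s m : ℕ) (hb : b.Prime) (hs : 0 < s) (hm : 0 < m)
    (k : Fin s → ℕ) (hk : k ≠ 0) :
    ({pg : Polynomial (ZMod b) × (Fin s → Polynomial (ZMod b)) |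
        (pg.1.Monic ∧ Irreducible pg.1 ∧ pg.1.natDegree = m) ∧
        (∀ j, pg.2 j ≠ 0 ∧ (pg.2 j).natDegree < m) ∧
        pg.1 ∣ ∑ j, natPoly b (k j) * pg.2 j}.ncard : ℝ) /
      ({pg : Polynomial (ZMod b) × (Fin s → Polynomial (ZMod b)) |
        (pg.1.Monic ∧ Irreducible pg.1 ∧ pg.1.natDegree = m) ∧
        ∀ j, pg.2 j ≠ 0 ∧ (pg.2 j).natDegree < m}.ncard : ℝ)
      ≤ 3 * (∑ j, nrtWeight b (k j) : ℝ) / ((b : ℝ) ^ m - 1) :=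
  stmt_14_general b s m hb hm k hk
end

section
/- Let b ≥ 2 be an integer and λ ∈ (0, 1). Then the sum over all positive integers k of b^{−λ μ_∞(k)} is finite and equals A_{∞,λ} = ∏_{ℓ=1}^∞ (1 + (b−1)/b^{λ ℓ}) − 1, where μ_∞(k) = c_1 + c_2 + ... + c_v is the sum of the positions of all nonzero base-b digits of k. -/
/-- The infinite Dick weight `μ_∞(k)`: the sum of the positions (counting
from 1) of all nonzero base-`b` digits of `k`; `μ_∞(0) = 0`. -/
def infDickWeight (b k : ℕ) : ℕ :=
  ((((List.range (Nat.digits b k).length).filter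
      (fun i => (Nat.digits b k).getD i 0 ≠ 0))).map (· + 1)).sum

/-!
Writing `k < b^(n+1)` as `d * b^n + r` with `d < b` and `r < b^n`, the top digit `d` adds `n + 1`
to the weight if `d ≠ 0` and nothing otherwise. Hence in any commutative semiring
`∑_{k < b^n} x^{μ_∞(k)} = ∏_{ℓ < n} (1 + (b-1) x^{ℓ+1})`. For `x = b^{-λ} ∈ [0, 1)` the terms
are nonnegative and the right side tends to the convergent infinite product, so the whole series
has that sum; dropping the term `k = 0` subtracts `1`.
-/

open Finset Filter Topology

theorem Nat.mul_pow_add_div_pow_mod_of_lt {b d r n i : ℕ} (hb : 0 < b) (hi : i < n) :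
    (d * b ^ n + r) / b ^ i % b = r / b ^ i % b := by
  obtain ⟨j, rfl⟩ := Nat.exists_eq_add_of_lt hi
  rw [show d * b ^ (i + j + 1) + r = r + b ^ i * (b * (d * b ^ j)) by ring,
    Nat.add_mul_div_left _ _ (by positivity), Nat.add_mul_mod_self_left]

theorem Nat.mul_pow_add_div_pow_mod_self {b d r n : ℕ} (hd : d < b) (hr : r < b ^ n) :
    (d * b ^ n + r) / b ^ n % b = d := by
  rw [mul_comm, Nat.mul_add_div (Nat.pow_pos (by omega : 0 < b)), Nat.div_eq_of_lt hr, add_zero,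
    Nat.mod_eq_of_lt hd]

theorem Finset.sum_range_mul_eq_sum_sum {M : Type*} [AddCommMonoid M] (f : ℕ → M) (m N : ℕ) :
    ∑ k ∈ range (m * N), f k = ∑ d ∈ range m, ∑ r ∈ range N, f (d * N + r) := by
  induction m with
  | zero => simp
  | succ m ih => rw [add_mul, one_mul, sum_range_add, ih, sum_range_succ]

@[simp]
theorem infDickWeight_zero (b : ℕ) : infDickWeight b 0 = 0 := by
  simp [infDickWeight]

theorem infDickWeight_eq_sum_range {b k n : ℕ} (hb : 2 ≤ b) (hk : k < b ^ n) :
    infDickWeight b k = ∑ i ∈ range n, if k / b ^ i % b ≠ 0 then i + 1 else 0 := by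
  have hlen : (Nat.digits b k).length ≤ n := (Nat.digits_length_le_iff hb k).2 hk
  change ∑ i ∈ range (Nat.digits b k).length with (Nat.digits b k).getD i 0 ≠ 0, (i + 1 : ℕ) = _
  rw [sum_filter, ← sum_subset (range_subset_range.2 hlen)]
  · exact sum_congr rfl fun i _ => by rw [Nat.getD_digits _ _ hb]
  · intro i _ hi
    rw [← Nat.getD_digits _ _ hb, List.getD_eq_default _ _ (not_lt.1 (mem_range.not.1 hi))]
    simp

theorem infDickWeight_mul_pow_add {b d r n : ℕ} (hb : 2 ≤ b) (hd : d < b) (hr : r < b ^ n) :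
    infDickWeight b (d * b ^ n + r) = infDickWeight b r + if d ≠ 0 then n + 1 else 0 := by
  have hlt : d * b ^ n + r < b ^ (n + 1) :=
    calc d * b ^ n + r < (d + 1) * b ^ n := by linarith
      _ ≤ b * b ^ n := Nat.mul_le_mul_right _ hd
      _ = b ^ (n + 1) := (pow_succ' b n).symm
  rw [infDickWeight_eq_sum_range hb hlt, infDickWeight_eq_sum_range hb hr, sum_range_succ,
    Nat.mul_pow_add_div_pow_mod_self hd hr]
  congr 1
  refine sum_congr rfl fun i hi => ?_
  rw [Nat.mul_pow_add_div_pow_mod_of_lt (by omega) (mem_range.1 hi)]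

theorem sum_range_pow_infDickWeight {R : Type*} [CommSemiring R] {b : ℕ} (hb : 2 ≤ b) (x : R)
    (n : ℕ) :
    ∑ k ∈ range (b ^ n), x ^ infDickWeight b k =
      ∏ ℓ ∈ range n, (1 + (b - 1 : ℕ) * x ^ (ℓ + 1)) := by
  induction n with
  | zero => simp
  | succ n ih =>
    have hblock : ∀ d ∈ range b, ∑ r ∈ range (b ^ n), x ^ infDickWeight b (d * b ^ n + r) =
        (if d ≠ 0 then x ^ (n + 1) else 1) * ∑ r ∈ range (b ^ n), x ^ infDickWeight b r := by
      intro d hd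
      rw [mul_sum]
      refine sum_congr rfl fun r hr => ?_
      rw [infDickWeight_mul_pow_add hb (mem_range.1 hd) (mem_range.1 hr), pow_add]
      split_ifs <;> simp [mul_comm]
    have htop : ∑ d ∈ range b, (if d ≠ 0 then x ^ (n + 1) else 1) =
        1 + (b - 1 : ℕ) * x ^ (n + 1) := by
      obtain ⟨c, rfl⟩ := Nat.exists_eq_add_of_le' (by omega : 1 ≤ b)
      simp [sum_range_succ', add_comm]
    rw [pow_succ', sum_range_mul_eq_sum_sum, sum_congr rfl hblock, ← sum_mul, htop, ih,
      prod_range_succ, mul_comm]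

theorem hasSum_of_tendsto_sum_range_comp {f : ℕ → ℝ} (hf : ∀ n, 0 ≤ f n) {φ : ℕ → ℕ}
    (hφ : Tendsto φ atTop atTop) {a : ℝ}
    (ha : Tendsto (fun n => ∑ i ∈ range (φ n), f i) atTop (𝓝 a)) : HasSum f a := by
  have hmono : Monotone fun N => ∑ i ∈ range N, f i := fun M N h =>
    sum_le_sum_of_subset_of_nonneg (range_mono h) fun i _ _ => hf i
  have hle : ∀ N, ∑ i ∈ range N, f i ≤ a := fun N =>
    ge_of_tendsto ha ((hφ.eventually_ge_atTop N).mono fun n hn => hmono hn)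
  have hs := summable_of_sum_range_le hf hle
  rw [tendsto_nhds_unique ha (hs.hasSum.tendsto_sum_nat.comp hφ)]
  exact hs.hasSum

theorem hasSum_pow_infDickWeight {b : ℕ} (hb : 2 ≤ b) {x : ℝ} (hx0 : 0 ≤ x) (hx1 : x < 1) :
    HasSum (fun k => x ^ infDickWeight b k) (∏' ℓ : ℕ, (1 + (b - 1 : ℕ) * x ^ (ℓ + 1))) := by
  have hmult : Multipliable fun ℓ : ℕ => 1 + (b - 1 : ℕ) * x ^ (ℓ + 1) :=
    Real.multipliable_one_add_of_summable
      (((summable_nat_add_iff 1).2 (summable_geometric_of_lt_one hx0 hx1)).mul_left _)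
  refine hasSum_of_tendsto_sum_range_comp (fun k => pow_nonneg hx0 _)
    (tendsto_pow_atTop_atTop_of_one_lt (by omega : 1 < b)) ?_
  simpa only [sum_range_pow_infDickWeight hb] using hmult.hasProd.tendsto_prod_nat

/-- For an integer base `b ≥ 2` and `λ ∈ (0,1)`, the sum
`∑_{k ≥ 1} b^{-λ μ_∞(k)}` converges and equals
`A_{∞,λ} = ∏_{ℓ=1}^∞ (1 + (b-1)/b^{λℓ}) - 1`. -/
theorem stmt_16 (b : ℕ) (hb : 2 ≤ b) (l : ℝ) (hl : l ∈ Set.Ioo (0 : ℝ) 1) :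
    Summable (fun k : ℕ => (b : ℝ) ^ (-(l * (infDickWeight b (k + 1) : ℝ)))) ∧
    ∑' k : ℕ, (b : ℝ) ^ (-(l * (infDickWeight b (k + 1) : ℝ))) =
      (∏' ℓ : ℕ, (1 + ((b : ℝ) - 1) / (b : ℝ) ^ (l * ((ℓ : ℝ) + 1)))) - 1 := by
  have hb1 : (1 : ℝ) < b := by exact_mod_cast hb
  set x := (b : ℝ) ^ (-l)
  have hx0 : 0 ≤ x := by positivity
  have hx1 : x < 1 := Real.rpow_lt_one_of_one_lt_of_neg hb1 (neg_neg_iff_pos.2 hl.1)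
  have hterm : ∀ m : ℕ, (b : ℝ) ^ (-(l * m)) = x ^ m := fun m => by
    rw [← Real.rpow_natCast, ← Real.rpow_mul (by positivity), neg_mul]
  have hfactor : ∀ ℓ : ℕ, 1 + ((b : ℝ) - 1) / (b : ℝ) ^ (l * ((ℓ : ℝ) + 1)) =
      1 + (b - 1 : ℕ) * x ^ (ℓ + 1) := fun ℓ => by
    rw [← hterm, Nat.cast_sub (by omega), div_eq_mul_inv, ← Real.rpow_neg (by positivity)]
    push_cast
    ring_nf
  have h := (hasSum_nat_add_iff' 1).2 (hasSum_pow_infDickWeight hb hx0 hx1)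
  simp only [hterm, hfactor]
  simpa using And.intro h.summable h.tsum_eq
end

section
/- Let a, q > 0 and x ∈ (0,1). Then ∑_{j=1}^s x^{a(j−1)^q} ≤ 1 + Γ(1/q) / (q a^{1/q} (−log x)^{1/q}) for every positive integer s, where Γ is the Gamma function. -/
/-!
Writing `x ^ (a t ^ q) = exp (-b t ^ q)` with `b = a (-log x) > 0`, the summand is a nonnegative
decreasing function of `t ≥ 0`. Hence the sum over `j < s` is at most its first term `1` plus
`∫_0^∞ exp (-b t ^ q) dt`, and the substitution `u = b t ^ q` turns that integral into
`Γ(1/q) / (q b^{1/q})`.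
-/

open Real Set MeasureTheory

lemma sum_range_le_add_integral_Ioi {f : ℝ → ℝ} (hanti : AntitoneOn f (Ici 0))
    (hnonneg : ∀ t, 0 ≤ t → 0 ≤ f t) (hint : IntegrableOn f (Ioi 0)) (s : ℕ) :
    ∑ j ∈ Finset.range s, f j ≤ f 0 + ∫ t in Ioi 0, f t := by
  calc ∑ j ∈ Finset.range s, f j
      ≤ ∑ j ∈ Finset.range (s + 1), f j :=
        Finset.sum_le_sum_of_subset_of_nonneg (Finset.range_subset_range.mpr s.le_succ)
          fun j _ _ => hnonneg j (Nat.cast_nonneg j)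
    _ = f 0 + ∑ i ∈ Finset.range s, f (0 + ↑(i + 1)) := by
        rw [Finset.sum_range_succ', add_comm]
        simp
    _ ≤ f 0 + ∫ t in (0 : ℝ)..0 + s, f t := by
        gcongr
        exact (hanti.mono Icc_subset_Ici_self).sum_le_integral
    _ ≤ f 0 + ∫ t in Ioi 0, f t := by
        gcongr
        rw [zero_add, intervalIntegral.integral_of_le (Nat.cast_nonneg s)]
        exact setIntegral_mono_set hint
          (ae_restrict_of_forall_mem measurableSet_Ioi fun t ht => hnonneg t ht.le)
          (Filter.Eventually.of_forall Ioc_subset_Ioi_self)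

lemma antitoneOn_exp_neg_mul_rpow {b q : ℝ} (hb : 0 < b) (hq : 0 < q) :
    AntitoneOn (fun t : ℝ => exp (-b * t ^ q)) (Ici 0) := fun u hu v _ huv => by
  have := rpow_le_rpow hu huv hq.le
  simp only [neg_mul, exp_le_exp, neg_le_neg_iff]
  gcongr

lemma integrableOn_exp_neg_mul_rpow {b q : ℝ} (hb : 0 < b) (hq : 0 < q) :
    IntegrableOn (fun t : ℝ => exp (-b * t ^ q)) (Ioi 0) := by
  simpa only [rpow_zero, one_mul] using
    integrableOn_rpow_mul_exp_neg_mul_rpow neg_one_lt_zero hq hb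

lemma integral_exp_neg_mul_rpow_eq_Gamma_div {b q : ℝ} (hb : 0 < b) (hq : 0 < q) :
    ∫ t in Ioi 0, exp (-b * t ^ q) = Gamma (1 / q) / (q * b ^ (1 / q)) := by
  rw [integral_exp_neg_mul_rpow hq hb, Gamma_add_one (one_div_ne_zero hq.ne'),
    neg_div, rpow_neg hb.le]
  field_simp

theorem stmt_18_general (a q x : ℝ) (ha : 0 < a) (hq : 0 < q)
    (hx : x ∈ Set.Ioo (0 : ℝ) 1) (s : ℕ) :
    ∑ j ∈ Finset.range s, x ^ (a * (j : ℝ) ^ q) ≤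
      1 + Real.Gamma (1 / q) / (q * a ^ (1 / q) * (-Real.log x) ^ (1 / q)) := by
  obtain ⟨hx0, hx1⟩ := hx
  have hlog : 0 < -log x := neg_pos.mpr (log_neg hx0 hx1)
  have hb : 0 < a * -log x := mul_pos ha hlog
  have hpow (t : ℝ) : x ^ (a * t ^ q) = exp (-(a * -log x) * t ^ q) := by
    rw [rpow_def_of_pos hx0]
    ring_nf
  simp_rw [hpow]
  calc _ ≤ exp (-(a * -log x) * 0 ^ q) + ∫ t in Ioi 0, exp (-(a * -log x) * t ^ q) :=
        sum_range_le_add_integral_Ioi (antitoneOn_exp_neg_mul_rpow hb hq)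
          (fun _ _ => (exp_pos _).le) (integrableOn_exp_neg_mul_rpow hb hq) s
    _ = _ := by
        rw [zero_rpow hq.ne', mul_zero, exp_zero, integral_exp_neg_mul_rpow_eq_Gamma_div hb hq,
          mul_rpow ha.le hlog.le, mul_assoc]

/-- For `a, q > 0` and `x ∈ (0,1)`:
`∑_{j=1}^{s} x^{a (j-1)^q} ≤ 1 + Γ(1/q) / (q a^{1/q} (-log x)^{1/q})`. -/
theorem stmt_18 (a q x : ℝ) (ha : 0 < a) (hq : 0 < q)
    (hx : x ∈ Set.Ioo (0 : ℝ) 1) (s : ℕ) (hs : 0 < s) :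
    ∑ j ∈ Finset.range s, x ^ (a * (j : ℝ) ^ q) ≤
      1 + Real.Gamma (1 / q) / (q * a ^ (1 / q) * (-Real.log x) ^ (1 / q)) :=
  stmt_18_general a q x ha hq hx s
end
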